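/- arXiv:1911.10485 — 7 statements merged into one kernel-verified Lean document; each statement's English description precedes it below -/
import Mathlib

section
/- Every loopless matroid M = (S, I) of rank r admits a rank preserving reduction to a partition matroid N = (S, J); that is, there exists a partition S = S_1 ∪ … ∪ S_r into r nonempty classes such that every set containing exactly one element from each class S_i is a basis of M (in particular every transversal of the partition is independent in M). -/
/-!
Enumerate a basis as `e₀, …, e_{r-1}` and let `Fₙ` be the closure of `{eᵢ | i < n}`. This is a
chain of flats with `F₀ = ∅` (no loops) and `F_r = E`, so the layers `Sᵢ = F_{i+1} \ Fᵢ` partition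
`E` into `r` nonempty classes, `eᵢ ∈ Sᵢ`. If `fᵢ ∈ Sᵢ` for every `i`, then `fᵢ` avoids the flat
`Fᵢ`, which contains `f₀, …, f_{i-1}`; hence the `fᵢ` are independent, and being `r` of them they
form a basis.
-/

open Set

variable {α : Type*}

/-- The ground set of the matroid `M` can be partitioned into `k` independent sets. -/
def Matroid.IsColorable (M : Matroid α) (k : ℕ) : Prop :=
  ∃ I : Fin k → Set α, (∀ i, M.Indep (I i)) ∧ (⋃ i, I i) = M.E ∧
    Pairwise fun i j => Disjoint (I i) (I j)

/-- The coloring number of the matroid `M`: the minimum number of independent sets into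
which the ground set can be partitioned. -/
noncomputable def Matroid.chi (M : Matroid α) : ℕ := sInf {k | M.IsColorable k}

/-- The (extended, cardinality-valued) rank of the matroid `M`. -/
noncomputable def Matroid.rkE (M : Matroid α) : ℕ∞ := ⨆ I ∈ {I | M.Indep I}, I.encard

/-- `N` is the partition matroid determined by the partition `P` of its ground set:
a set is independent iff it meets every class of `P` in at most one element. -/
def Matroid.IsPartitionMatroid (N : Matroid α) (P : Set (Set α)) : Prop :=
  ⋃₀ P = N.E ∧ (∀ c ∈ P, ∀ c' ∈ P, c ≠ c' → Disjoint c c') ∧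
    ∀ X, N.Indep X ↔ X ⊆ N.E ∧ ∀ c ∈ P, (X ∩ c).encard ≤ 1

/-- `N` is a reduction of `M` (written `N ⪯ M`): every `N`-independent set is
`M`-independent. -/
def Matroid.Reduction (N M : Matroid α) : Prop :=
  N.E = M.E ∧ ∀ I, N.Indep I → M.Indep I

/-- `M` is a paving matroid of rank `r`: it has rank `r` and every subset of the ground
set of size at most `r - 1` is independent. -/
def Matroid.IsPavingOfRank (M : Matroid α) (r : ℕ) : Prop :=
  M.rkE = (r : ℕ∞) ∧ ∀ X ⊆ M.E, X.encard ≤ ((r - 1 : ℕ) : ℕ∞) → M.Indep X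

/-- A cut (cocircuit) of the matroid `M`: an inclusionwise minimal subset of the ground
set intersecting every basis. -/
def Matroid.IsCut (M : Matroid α) (X : Set α) : Prop :=
  X ⊆ M.E ∧ (∀ B, M.IsBase B → (X ∩ B).Nonempty) ∧
    ∀ Y, Y ⊂ X → ∃ B, M.IsBase B ∧ Y ∩ B = ∅

open Function

namespace Set

lemma encard_range_of_injective {n : ℕ} {f : Fin n → α} (hf : f.Injective) :
    (range f).encard = n := by
  rw [← image_univ, hf.encard_image, encard_univ, ENat.card_eq_coe_fintype_card, Fintype.card_fin]

section Layers

variable {F : ℕ → Set α}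

lemma pairwise_disjoint_diff_succ (hF : Monotone F) :
    Pairwise (Disjoint on fun i => F (i + 1) \ F i) := by
  have hlt {i j : ℕ} (hij : i < j) : Disjoint (F (i + 1) \ F i) (F (j + 1) \ F j) :=
    disjoint_left.2 fun _ hi hj => hj.2 (hF hij hi.1)
  exact fun i j hij => hij.lt_or_gt.elim hlt fun h => (hlt h).symm

lemma iUnion_fin_diff_succ (hF : Monotone F) (n : ℕ) :
    ⋃ i : Fin n, (F (i + 1) \ F i) = F n \ F 0 := by
  refine subset_antisymm
    (iUnion_subset fun i => sdiff_subset_sdiff (hF i.2) (hF (Nat.zero_le _))) fun x hx => ?_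
  induction n with
  | zero => exact absurd hx.1 hx.2
  | succ n ih =>
    by_cases hxn : x ∈ F n
    · obtain ⟨i, hi⟩ := mem_iUnion.1 (ih ⟨hxn, hx.2⟩)
      exact mem_iUnion.2 ⟨i.castSucc, hi⟩
    · exact mem_iUnion.2 ⟨Fin.last n, hx.1, hxn⟩

end Layers

lemma injective_of_pairwise_disjoint {ι : Type*} {S : ι → Set α}
    (hS : Pairwise (Disjoint on S)) (hne : ∀ i, (S i).Nonempty) : S.Injective :=
  fun i j hij => hS.eq (by rw [Function.onFun, hij, disjoint_self]; exact (hne j).ne_empty)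

lemma exists_injective_range_eq_of_encard_inter_eq_one {ι : Type*} {S : ι → Set α}
    (hS : Pairwise (Disjoint on S)) {T : Set α} (hTS : T ⊆ ⋃ i, S i)
    (hT : ∀ i, (T ∩ S i).encard = 1) :
    ∃ f : ι → α, f.Injective ∧ range f = T ∧ ∀ i, f i ∈ S i := by
  choose f hf using fun i => encard_eq_one.1 (hT i)
  have hfTS : ∀ i, f i ∈ T ∩ S i := fun i => (hf i).symm ▸ rfl
  refine ⟨f, fun i j hij => hS.eq (not_disjoint_iff.2 ⟨f i, (hfTS i).2, hij ▸ (hfTS j).2⟩),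
    subset_antisymm (range_subset_iff.2 fun i => (hfTS i).1) fun x hx => ?_, fun i => (hfTS i).2⟩
  obtain ⟨i, hi⟩ := mem_iUnion.1 (hTS hx)
  have hxi : x ∈ T ∩ S i := ⟨hx, hi⟩
  rw [hf i] at hxi
  exact ⟨i, hxi.symm⟩

end Set

namespace Matroid

variable {M : Matroid α}

lemma rkE_eq_eRank (M : Matroid α) : M.rkE = M.eRank := by
  refine (iSup₂_le fun _ hI => hI.encard_le_eRank).antisymm ?_
  obtain ⟨B, hB⟩ := M.exists_isBase
  rw [← hB.encard_eq_eRank]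
  exact le_iSup₂ (f := fun I (_ : I ∈ {I | M.Indep I}) => I.encard) B hB.indep

lemma indep_range_of_forall_mem_diff_closure {ι : Type*} [LinearOrder ι] [Finite ι] {f : ι → α}
    (hf : ∀ i, f i ∈ M.E \ M.closure (f '' Iio i)) : M.Indep (range f) := by
  classical
  have : Fintype ι := Fintype.ofFinite ι
  suffices ∀ s : Finset ι, M.Indep (f '' s) by simpa using this Finset.univ
  intro s
  induction s using Finset.induction_on_max with
  | empty => simp
  | insert a s hlt ih =>
    rw [Finset.coe_insert, image_insert_eq, ih.insert_indep_iff]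
    exact Or.inl (sdiff_subset_sdiff_right
      (M.closure_subset_closure (image_mono fun x hx => hlt x hx)) (hf a))

lemma indep_range_of_mem_diff_isFlat {F : ℕ → Set α} (hF : Monotone F)
    (hflat : ∀ n, M.IsFlat (F n)) {r : ℕ} {f : Fin r → α}
    (hf : ∀ i : Fin r, f i ∈ F (i + 1) \ F i) : M.Indep (range f) := by
  refine indep_range_of_forall_mem_diff_closure fun i =>
    ⟨(hflat _).subset_ground (hf i).1, fun hi => (hf i).2 ?_⟩
  have hsub : f '' Iio i ⊆ F i := by
    rintro _ ⟨j, hj, rfl⟩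
    exact hF (Nat.succ_le_of_lt hj) (hf j).1
  exact (hflat i).closure ▸ M.closure_subset_closure hsub hi

lemma exists_isFlat_chain_of_eRank_eq [M.Loopless] {r : ℕ} (hr : M.eRank = r) :
    ∃ F : ℕ → Set α, Monotone F ∧ (∀ n, M.IsFlat (F n)) ∧ F 0 = ∅ ∧ F r = M.E ∧
      ∀ i < r, (F (i + 1) \ F i).Nonempty := by
  have : M.RankFinite := M.eRank_ne_top_iff.1 (hr ▸ ENat.natCast_ne_top r)
  obtain ⟨B, hB⟩ := M.exists_isBase
  obtain ⟨n, e, he, rfl⟩ := hB.finite.fin_param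
  obtain rfl : n = r := by
    rw [← hB.encard_eq_eRank, encard_range_of_injective he] at hr
    exact_mod_cast hr
  refine ⟨fun k => M.closure (e '' {i | (i : ℕ) < k}), fun k l hkl =>
    M.closure_subset_closure (image_mono fun i hi => lt_of_lt_of_le hi hkl),
    fun _ => isFlat_closure _, by simp [closure_empty], by simp [hB.closure_eq], fun i hi => ?_⟩
  refine ⟨e ⟨i, hi⟩, M.subset_closure _ ((image_subset_range _ _).trans hB.subset_ground)
    ⟨⟨i, hi⟩, by simp, rfl⟩, fun hmem => ?_⟩
  refine hB.indep.notMem_closure_sdiff_of_mem (mem_range_self _) (M.closure_subset_closure ?_ hmem)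
  rintro _ ⟨j, hj, rfl⟩
  exact ⟨mem_range_self j, fun hji => hj.ne (congrArg Fin.val (he hji))⟩

end Matroid

open Matroid

theorem statement_0_general (M : Matroid α)
    (hloopless : ∀ e ∈ M.E, M.Indep {e}) (r : ℕ) (hrank : M.rkE = (r : ℕ∞)) :
    ∃ P : Set (Set α), ⋃₀ P = M.E ∧ (∀ c ∈ P, ∀ c' ∈ P, c ≠ c' → Disjoint c c') ∧
      ∅ ∉ P ∧ P.encard = (r : ℕ∞) ∧
      ∀ T ⊆ M.E, (∀ c ∈ P, (T ∩ c).encard = 1) → M.IsBase T := by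
  have : M.Loopless :=
    loopless_iff_forall_isNonloop.2 fun e he => indep_singleton.1 (hloopless e he)
  rw [M.rkE_eq_eRank] at hrank
  obtain ⟨F, hF, hflat, hF0, hFr, hne⟩ := exists_isFlat_chain_of_eRank_eq hrank
  set S : Fin r → Set α := fun i => F (i + 1) \ F i
  have hdisj : Pairwise (Disjoint on S) :=
    (pairwise_disjoint_diff_succ hF).comp_of_injective Fin.val_injective
  have hSne (i : Fin r) : (S i).Nonempty := hne i i.2
  have hcover : ⋃ i, S i = M.E := by rw [iUnion_fin_diff_succ hF, hFr, hF0, sdiff_empty]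
  refine ⟨range S, by rw [sUnion_range, hcover], ?_, fun ⟨i, hi⟩ => (hSne i).ne_empty hi,
    encard_range_of_injective (injective_of_pairwise_disjoint hdisj hSne), fun T hTE hT => ?_⟩
  · rintro _ ⟨i, rfl⟩ _ ⟨j, rfl⟩ hij
    exact hdisj (ne_of_apply_ne S hij)
  obtain ⟨f, hf, rfl, hfS⟩ := exists_injective_range_eq_of_encard_inter_eq_one hdisj
    (hcover ▸ hTE) fun i => hT _ ⟨i, rfl⟩
  have hind := M.indep_range_of_mem_diff_isFlat hF hflat hfS
  exact hind.isBase_of_eRk_ge (finite_range f)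
    (by rw [hind.eRk_eq_encard, encard_range_of_injective hf, hrank])

/-- Every loopless matroid of rank `r` admits a rank preserving reduction to a partition
matroid: there is a partition of the ground set into `r` nonempty classes such that every
set containing exactly one element from each class is a basis of `M`. -/
theorem statement_0 (M : Matroid α) (hfin : M.E.Finite)
    (hloopless : ∀ e ∈ M.E, M.Indep {e}) (r : ℕ) (hrank : M.rkE = (r : ℕ∞)) :
    ∃ P : Set (Set α), ⋃₀ P = M.E ∧ (∀ c ∈ P, ∀ c' ∈ P, c ≠ c' → Disjoint c c') ∧
      ∅ ∉ P ∧ P.encard = (r : ℕ∞) ∧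
      ∀ T ⊆ M.E, (∀ c ∈ P, (T ∩ c).encard = 1) → M.IsBase T :=
  statement_0_general M hloopless r hrank
end

section
/- Let K_{2k} be the complete graph on 2k vertices and let M be its graphic matroid (which is k-colorable). Then every partition matroid N with N ⪯ M satisfies χ(N) ≥ 2k−1; equivalently, in any coloring of the edges of K_{2k} in which no cycle is rainbow (i.e., every cycle has two edges of the same color), some color class has at least 2k−1 edges. -/
open Set

variable {α : Type*}

/-! Colour each edge of `K_n` by its class in `P`. A triangle is dependent in the graphic
matroid, hence in `N`, so two of its edges share a class: no triangle is rainbow. Gallai's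
argument then makes some colour class connected and spanning: by induction some colour `c`
connects all vertices but `v`; either `v` has an edge of colour `c`, or every triangle `v u w`
with `uw` of colour `c` forces `vu` and `vw` to share a colour, so all edges at `v` have one
colour. A connected spanning subgraph of `K_{2k}` has at least `2k - 1` edges. -/

namespace SimpleGraph

variable {V : Type*} {G : SimpleGraph V}

theorem Reachable.apply_eq_of_forall_adj {β : Type*} {g : V → β}
    (hg : ∀ x y, G.Adj x y → g x = g y) {u v : V} (h : G.Reachable u v) : g u = g v := by
  rw [reachable_iff_reflTransGen] at h
  induction h with
  | refl => rfl
  | tail _ hxy ih => exact ih.trans (hg _ _ hxy)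

theorem connected_induce_insert_of_adj {s : Set V} {u v : V} (hs : (G.induce s).Connected)
    (hu : u ∈ s) (hvu : G.Adj v u) : (G.induce (insert v s)).Connected := by
  rw [Set.insert_eq]
  exact connected_induce_union (by simp) hs.preconnected rfl hu hvu

theorem connected_induce_insert_of_forall_adj {s : Set V} {v : V}
    (hv : ∀ u ∈ s, u ≠ v → G.Adj v u) : (G.induce (insert v s)).Connected := by
  rw [connected_iff_exists_forall_reachable]
  refine ⟨⟨v, s.mem_insert v⟩, fun ⟨u, hu⟩ => ?_⟩
  by_cases huv : u = v
  · subst huv; rfl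
  · exact Adj.reachable (by simpa using hv u (hu.resolve_left huv) huv)

theorem not_isAcyclic_fromEdgeSet_triangle {a b c : V} (hab : a ≠ b) (hbc : b ≠ c)
    (hac : a ≠ c) : ¬ (fromEdgeSet {s(a, b), s(b, c), s(a, c)}).IsAcyclic := by
  classical
  exact fun h => h.cliqueFree le_rfl {a, b, c} (is3Clique_triple_iff.2 (by simp [*]))

theorem Connected.natCard_le_encard_add_one [Finite V] (h : G.Connected) {S : Set (Sym2 V)}
    (hS : G.edgeSet ⊆ S) : (Nat.card V : ℕ∞) ≤ S.encard + 1 := by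
  calc (Nat.card V : ℕ∞) ≤ (Nat.card G.edgeSet : ℕ∞) + 1 := by
        exact_mod_cast h.card_vert_le_card_edgeSet_add_one
    _ = G.edgeSet.encard + 1 := by
        rw [Nat.card_coe_set_eq, Set.Finite.cast_ncard_eq (Set.toFinite _)]
    _ ≤ S.encard + 1 := by gcongr

end SimpleGraph

section Gallai

open SimpleGraph

variable {V C : Type*}

def RainbowTriangleFree (f : Sym2 V → C) : Prop :=
  ∀ a b c : V, a ≠ b → b ≠ c → a ≠ c →
    f s(a, b) = f s(b, c) ∨ f s(b, c) = f s(a, c) ∨ f s(a, b) = f s(a, c)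

abbrev colorClassGraph (f : Sym2 V → C) (c : C) : SimpleGraph V := fromEdgeSet {e | f e = c}

namespace RainbowTriangleFree

variable {f : Sym2 V → C}

/-- The triangle `v u w` is not rainbow, so when no edge from `v` to `s` has colour `c`, the
colour of `s(v, u)` does not change along an edge `s(u, w)` of colour `c`. -/
theorem apply_eq_of_reachable (hf : RainbowTriangleFree f) {s : Set V} {c : C} {v : V}
    (hvs : v ∉ s) (hv : ∀ u ∈ s, f s(v, u) ≠ c) {u w : s}
    (huw : ((colorClassGraph f c).induce s).Reachable u w) : f s(v, u) = f s(v, w) := by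
  refine huw.apply_eq_of_forall_adj (g := fun x : s => f s(v, x)) fun x y hxy => ?_
  obtain ⟨hxy, hne⟩ := (fromEdgeSet_adj _).1 (comap_adj.1 hxy)
  have hvx : v ≠ x := fun h => hvs (h ▸ x.2)
  have hvy : v ≠ y := fun h => hvs (h ▸ y.2)
  rcases hf v x y hvx hne hvy with h | h | h
  · exact absurd (h.trans hxy) (hv x x.2)
  · exact absurd (h.symm.trans hxy) (hv y y.2)
  · exact h

theorem exists_connected_induce (hf : RainbowTriangleFree f) {s : Finset V}
    (hs : s.Nonempty) : ∃ c, ((colorClassGraph f c).induce s).Connected := by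
  classical
  induction hs using Finset.Nonempty.cons_induction with
  | singleton v =>
    refine ⟨f s(v, v), ?_⟩
    rw [Finset.coe_singleton, induce_singleton_eq_top]
    exact connected_top
  | cons v s hvs hs ih =>
    obtain ⟨c, hc⟩ := ih
    rw [Finset.coe_cons]
    by_cases hvc : ∃ u ∈ s, f s(v, u) = c
    · obtain ⟨u, hu, hvu⟩ := hvc
      refine ⟨c, connected_induce_insert_of_adj hc hu ((fromEdgeSet_adj _).2 ⟨hvu, ?_⟩)⟩
      rintro rfl
      exact hvs hu
    · push Not at hvc
      obtain ⟨u₀, hu₀⟩ := hs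
      refine ⟨f s(v, u₀), connected_induce_insert_of_forall_adj fun u hu huv => ?_⟩
      refine (fromEdgeSet_adj _).2 ⟨?_, Ne.symm huv⟩
      exact hf.apply_eq_of_reachable (s := s) hvs hvc (u := ⟨u, hu⟩) (w := ⟨u₀, hu₀⟩)
        (hc.preconnected _ _)

theorem exists_connected_colorClassGraph [Fintype V] [Nonempty V] (hf : RainbowTriangleFree f) :
    ∃ c, (colorClassGraph f c).Connected := by
  obtain ⟨c, hc⟩ := hf.exists_connected_induce Finset.univ_nonempty
  rw [Finset.coe_univ] at hc
  exact ⟨c, (induceUnivIso _).connected_iff.1 hc⟩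

end RainbowTriangleFree

end Gallai

/-- The class of the partition `P` containing `x`; a junk value if `x ∉ ⋃₀ P`. -/
noncomputable def partClass (P : Set (Set α)) (x : α) : Set α :=
  Classical.epsilon fun c => c ∈ P ∧ x ∈ c

theorem partClass_spec {P : Set (Set α)} {x : α} (hx : x ∈ ⋃₀ P) :
    partClass P x ∈ P ∧ x ∈ partClass P x :=
  Classical.epsilon_spec hx

theorem partClass_eq {P : Set (Set α)} (hP : ∀ c ∈ P, ∀ c' ∈ P, c ≠ c' → Disjoint c c')
    {c : Set α} (hc : c ∈ P) {x : α} (hx : x ∈ c) : partClass P x = c := by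
  by_contra hne
  obtain ⟨hxP, hx'⟩ := partClass_spec (Set.mem_sUnion_of_mem hx hc)
  exact Set.disjoint_left.1 (hP _ hxP c hc hne) hx' hx

namespace Matroid

theorem IsPartitionMatroid.exists_ne_partClass_eq_of_not_indep {N : Matroid α}
    {P : Set (Set α)} (hN : N.IsPartitionMatroid P) {X : Set α} (hX : X ⊆ N.E)
    (hdep : ¬ N.Indep X) : ∃ x ∈ X, ∃ y ∈ X, x ≠ y ∧ partClass P x = partClass P y := by
  rw [hN.2.2] at hdep
  push Not at hdep
  obtain ⟨c, hc, hXc⟩ := hdep hX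
  obtain ⟨x, y, ⟨hxX, hxc⟩, ⟨hyX, hyc⟩, hxy⟩ := Set.one_lt_encard_iff.1 hXc
  exact ⟨x, hxX, y, hyX, hxy, by rw [partClass_eq hN.2.1 hc hxc, partClass_eq hN.2.1 hc hyc]⟩

open SimpleGraph in
theorem IsPartitionMatroid.rainbowTriangleFree_partClass {V : Type*} {M N : Matroid (Sym2 V)}
    {P : Set (Set (Sym2 V))} (hE : M.E = (⊤ : SimpleGraph V).edgeSet)
    (hM : ∀ F, M.Indep F → (fromEdgeSet F).IsAcyclic) (hN : N.IsPartitionMatroid P)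
    (hred : N.Reduction M) : RainbowTriangleFree (partClass P) := by
  intro a b c hab hbc hac
  have hT : {s(a, b), s(b, c), s(a, c)} ⊆ N.E := by
    simp [hred.1, hE, Set.insert_subset_iff, hab, hbc, hac]
  have hdep : ¬ N.Indep {s(a, b), s(b, c), s(a, c)} := fun h =>
    not_isAcyclic_fromEdgeSet_triangle hab hbc hac (hM _ (hred.2 _ h))
  obtain ⟨x, hx, y, hy, hxy, hxy'⟩ := hN.exists_ne_partClass_eq_of_not_indep hT hdep
  simp only [Set.mem_insert_iff, Set.mem_singleton_iff] at hx hy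
  rcases hx with rfl | rfl | rfl <;> rcases hy with rfl | rfl | rfl <;> tauto

end Matroid

/-- For the graphic matroid `M` of the complete graph on `2k` vertices, every partition
matroid `N` with `N ⪯ M` has a partition class of size at least `2k - 1`. -/
theorem statement_3 (k : ℕ) (hk : 1 ≤ k) (M : Matroid (Sym2 (Fin (2 * k))))
    (hE : M.E = (⊤ : SimpleGraph (Fin (2 * k))).edgeSet)
    (hInd : ∀ F : Set (Sym2 (Fin (2 * k))),
      M.Indep F ↔ F ⊆ M.E ∧ (SimpleGraph.fromEdgeSet F).IsAcyclic)
    (N : Matroid (Sym2 (Fin (2 * k)))) (P : Set (Set (Sym2 (Fin (2 * k)))))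
    (hN : N.IsPartitionMatroid P) (hred : N.Reduction M) :
    ∃ c ∈ P, ((2 * k - 1 : ℕ) : ℕ∞) ≤ c.encard := by
  have : Nontrivial (Fin (2 * k)) := Fin.nontrivial_iff_two_le.2 (by omega)
  obtain ⟨c, hc⟩ := (hN.rainbowTriangleFree_partClass hE (fun F hF => ((hInd F).1 hF).2)
    hred).exists_connected_colorClassGraph
  have hcolor : ∀ e ∈ (colorClassGraph (partClass P) c).edgeSet,
      partClass P e = c ∧ partClass P e ∈ P ∧ e ∈ partClass P e := by
    intro e he
    rw [SimpleGraph.edgeSet_fromEdgeSet] at he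
    exact ⟨he.1, partClass_spec (by rw [hN.1, hred.1, hE, SimpleGraph.edgeSet_top]; exact he.2)⟩
  obtain ⟨u, hu⟩ := hc.preconnected.exists_adj_of_nontrivial ⟨0, by omega⟩
  obtain ⟨hcu, hcP, -⟩ := hcolor _ ((SimpleGraph.mem_edgeSet _).2 hu)
  refine ⟨c, hcu ▸ hcP, ?_⟩
  have hcard := hc.natCard_le_encard_add_one fun e he => (hcolor e he).1 ▸ (hcolor e he).2.2
  rw [Nat.card_fin] at hcard
  rw [ENat.natCast_sub, Nat.cast_one]
  exact tsub_le_iff_right.2 hcard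
end

section
/- Let M = (S, I) be a matroid such that for every nonempty subset S' ⊆ S the restriction M|_{S'} has a cut (cocircuit) of size at most k. Then M can be reduced to a k-colorable partition matroid, i.e., there exists a partition matroid N = (S, J) with N ⪯ M and χ(N) ≤ k. -/
/-!
Peel the ground set: a cut `X` of `M|S` with `|X| ≤ k` becomes one class of the partition,
and `S \ X` is partitioned by induction. A set that meets `X` at most once and is independent
outside `X` stays independent, because a circuit never meets a cocircuit in exactly one element.
-/

open Set

variable {α : Type*}

namespace Matroid

variable {M : Matroid α} {P : Set (Set α)} {S T I K X : Set α} {x : α}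

lemma IsCut.isCocircuit (hX : M.IsCut X) : M.IsCocircuit X := by
  refine isCocircuit_iff_minimal.2 ⟨hX.2.1, fun Y hY hYX ↦ ?_⟩
  by_contra hXY
  obtain ⟨B, hB, hYB⟩ := hX.2.2 Y (hYX.ssubset_of_not_subset hXY)
  exact (hY B hB).ne_empty hYB

lemma IsCocircuit.indep_insert_of_disjoint (hK : M.IsCocircuit K) (hI : M.Indep I)
    (hIK : Disjoint I K) (hx : x ∈ K) : M.Indep (insert x I) := by
  by_contra hdep
  rw [not_indep_iff (insert_subset (hK.subset_ground hx) hI.subset_ground)] at hdep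
  obtain ⟨C, hCI, hC⟩ := hdep.exists_isCircuit_subset
  have hxC : x ∈ C := by_contra fun hxC ↦
    hC.not_indep (hI.subset ((subset_insert_iff_of_notMem hxC).1 hCI))
  refine hC.inter_isCocircuit_ne_singleton hK
    (subset_antisymm ?_ (singleton_subset_iff.2 ⟨hxC, hx⟩))
  rintro y ⟨hyC, hyK⟩
  obtain rfl | hyI := hCI hyC
  · rfl
  · exact absurd hyK (hIK.notMem_of_mem_left hyI)

lemma IsCocircuit.indep_of_encard_inter_le_one (hK : M.IsCocircuit K) (hTK : M.Indep (T \ K))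
    (hT : (T ∩ K).encard ≤ 1) : M.Indep T := by
  obtain h0 | ⟨x, hx⟩ := encard_le_one_iff_eq.1 hT
  · rwa [sdiff_eq_left.2 (disjoint_iff_inter_eq_empty.2 h0)] at hTK
  have hxK : x ∈ K := (hx.symm ▸ rfl : x ∈ T ∩ K).2
  rw [← inter_union_sdiff T K, hx, singleton_union]
  exact hK.indep_insert_of_disjoint hTK disjoint_sdiff_left hxK

theorem exists_partition_of_forall_isCut {k : ℕ} (hS : S.Finite)
    (hcut : ∀ T ⊆ S, T.Nonempty → ∃ X, (M ↾ T).IsCut X ∧ X.encard ≤ k) :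
    ∃ P : Set (Set α), ⋃₀ P = S ∧ P.PairwiseDisjoint id ∧ (∀ c ∈ P, c.encard ≤ k) ∧
      ∀ T ⊆ S, (∀ c ∈ P, (T ∩ c).encard ≤ 1) → M.Indep T := by
  induction hn : S.ncard using Nat.strong_induction_on generalizing S with
  | _ n ih =>
  obtain rfl | hne := S.eq_empty_or_nonempty
  · exact ⟨∅, sUnion_empty, pairwiseDisjoint_empty, by simp,
      fun T hT _ ↦ subset_empty_iff.1 hT ▸ M.empty_indep⟩
  obtain ⟨X, hX, hXk⟩ := hcut S Subset.rfl hne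
  have hK := hX.isCocircuit
  have hXS : X ⊆ S := hK.subset_ground
  have hlt : (S \ X).ncard < n := hn ▸ ncard_lt_ncard
    (sdiff_ssubset_left_iff.2 ((inter_eq_self_of_subset_right hXS).symm ▸ hK.nonempty)) hS
  obtain ⟨P, hPS, hPdisj, hPk, hPind⟩ :=
    ih _ hlt hS.sdiff (fun T hT ↦ hcut T (hT.trans sdiff_subset)) rfl
  refine ⟨insert X P, by rw [sUnion_insert, hPS, union_sdiff_cancel hXS],
    hPdisj.insert fun c hc _ ↦ ?_, forall_mem_insert.2 ⟨hXk, hPk⟩, fun T hTS hT ↦ ?_⟩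
  · exact disjoint_sdiff_right.mono_right (hPS ▸ subset_sUnion_of_mem hc)
  rw [forall_mem_insert] at hT
  have hTX : (M ↾ S).Indep (T \ X) :=
    ⟨hPind _ (sdiff_subset_sdiff_left hTS) fun c hc ↦
      (encard_mono (inter_subset_inter_left _ sdiff_subset)).trans (hT.2 c hc),
      sdiff_subset.trans hTS⟩
  exact (hK.indep_of_encard_inter_le_one hTX hT.1).of_restrict

/-- Independence is injectivity of `x ↦ {c ∈ P | x ∈ c}`, i.e. meeting each class at most once. -/
def ofPartition (P : Set (Set α)) : Matroid α :=
  ((freeOn univ).comap fun x ↦ {c ∈ P | x ∈ c}) ↾ ⋃₀ P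

lemma ofPartition_indep_iff (hP : P.PairwiseDisjoint id) :
    (ofPartition P).Indep I ↔ I ⊆ ⋃₀ P ∧ ∀ c ∈ P, (I ∩ c).encard ≤ 1 := by
  simp only [ofPartition, restrict_indep_iff, comap_indep_iff, freeOn_indep_iff, subset_univ,
    true_and]
  have hclasses : ∀ c ∈ P, ∀ y ∈ c, {c' ∈ P | y ∈ c'} = {c} := fun c hc y hy ↦
    Subset.antisymm (fun c' hc' ↦ hP.elim_set hc'.1 hc y hc'.2 hy) (by simpa using ⟨hc, hy⟩)
  refine ⟨fun ⟨hinj, hIP⟩ ↦ ⟨hIP, fun c hc ↦ encard_le_one_iff.2 fun a b ha hb ↦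
    hinj ha.1 hb.1 (show {c' ∈ P | a ∈ c'} = {c' ∈ P | b ∈ c'} by
      rw [hclasses c hc a ha.2, hclasses c hc b hb.2])⟩,
    fun ⟨hIP, h1⟩ ↦ ⟨fun a ha b hb hab ↦ ?_, hIP⟩⟩
  obtain ⟨c, hc, hac⟩ := hIP ha
  have hab' : {c' ∈ P | a ∈ c'} = {c' ∈ P | b ∈ c'} := hab
  have hbc : b ∈ c := (hab'.subset ⟨hc, hac⟩).2
  exact encard_le_one_iff.1 (h1 c hc) a b ⟨ha, hac⟩ ⟨hb, hbc⟩

lemma ofPartition_isPartitionMatroid (hP : P.PairwiseDisjoint id) :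
    (ofPartition P).IsPartitionMatroid P :=
  ⟨rfl, fun _ hc _ hc' hne ↦ hP hc hc' hne, fun _ ↦ ofPartition_indep_iff hP⟩

end Matroid

open Matroid in
/-- If every restriction of `M` to a nonempty subset of its ground set has a cut
(cocircuit) of size at most `k`, then `M` can be reduced to a `k`-colorable partition
matroid. -/
theorem statement_5 (M : Matroid α) (hfin : M.E.Finite) (k : ℕ)
    (hcut : ∀ S' ⊆ M.E, S'.Nonempty → ∃ X, (M.restrict S').IsCut X ∧ X.encard ≤ (k : ℕ∞)) :
    ∃ (N : Matroid α) (P : Set (Set α)), N.IsPartitionMatroid P ∧ N.Reduction M ∧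
      ∀ c ∈ P, c.encard ≤ (k : ℕ∞) := by
  obtain ⟨P, hPE, hPdisj, hPk, hPind⟩ := exists_partition_of_forall_isCut hfin hcut
  refine ⟨ofPartition P, P, ofPartition_isPartitionMatroid hPdisj, ⟨hPE, fun I hI ↦ ?_⟩, hPk⟩
  rw [ofPartition_indep_iff hPdisj, hPE] at hI
  exact hPind I hI.1 hI.2
end

section
/- Let M = (S, I) be a k-colorable paving matroid of rank r ≥ 2. Then there exists a ⌈rk/(r−1)⌉-colorable partition matroid N = (S, J) with N ⪯ M. -/
/-!
Since `M` has rank `r`, a `k`-coloring covers the ground set by `k` sets of size at most `r`,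
so `|E| ≤ rk ≤ (r - 1) ⌈rk/(r-1)⌉`. Hence `E` can be cut into `r - 1` blocks of size at most
`⌈rk/(r-1)⌉`. An independent set of the partition matroid of these blocks has at most `r - 1`
elements, and such sets are independent in the paving matroid `M`.
-/

open Set

variable {α : Type*}

namespace Matroid

variable {β : Type*}

/-- The partition matroid on `E` whose classes are the fibres of `φ`. -/
def partitionOn (E : Set α) (φ : α → β) : Matroid α := (freeOn univ).comap φ ↾ E

@[simp] lemma partitionOn_ground (E : Set α) (φ : α → β) : (partitionOn E φ).E = E := rfl

@[simp] lemma partitionOn_indep_iff {E I : Set α} {φ : α → β} :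
    (partitionOn E φ).Indep I ↔ InjOn φ I ∧ I ⊆ E := by
  simp [partitionOn]

lemma partitionOn_isPartitionMatroid (E : Set α) (φ : α → β) :
    (partitionOn E φ).IsPartitionMatroid (range fun b ↦ E ∩ φ ⁻¹' {b}) := by
  refine ⟨?_, ?_, fun X ↦ ?_⟩
  · ext x
    simp
  · rintro _ ⟨b, rfl⟩ _ ⟨b', rfl⟩ hne
    refine disjoint_left.2 fun x hx hx' ↦ hne ?_
    rw [← hx.2, ← hx'.2]
  · simp only [partitionOn_indep_iff, partitionOn_ground, mem_range, forall_exists_index,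
      forall_apply_eq_imp_iff, encard_le_one_iff]
    refine ⟨fun ⟨hinj, hXE⟩ ↦ ⟨hXE, fun b x y hx hy ↦ hinj hx.1 hy.1 (hx.2.2.trans hy.2.2.symm)⟩,
      fun ⟨hXE, h⟩ ↦ ⟨fun x hx y hy hxy ↦ h (φ x) x y ⟨hx, hXE hx, rfl⟩ ⟨hy, hXE hy, hxy.symm⟩,
        hXE⟩⟩

lemma Indep.encard_le_rkE {M : Matroid α} {I : Set α} (hI : M.Indep I) : I.encard ≤ M.rkE :=
  le_iSup₂ (f := fun I (_ : I ∈ {I | M.Indep I}) ↦ I.encard) I hI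

lemma IsColorable.encard_ground_le {M : Matroid α} {k : ℕ} (h : M.IsColorable k) :
    M.E.encard ≤ k * M.rkE := by
  obtain ⟨I, hI, hIE, -⟩ := h
  calc M.E.encard = (⋃ i, I i).encard := by rw [hIE]
    _ ≤ ∑ i, (I i).encard := encard_iUnion_le_of_fintype I
    _ ≤ ∑ _i : Fin k, M.rkE := Finset.sum_le_sum fun i _ ↦ (hI i).encard_le_rkE
    _ = k * M.rkE := by simp

lemma IsPavingOfRank.reduction_partitionOn {M : Matroid α} {r : ℕ} (hM : M.IsPavingOfRank r)
    {φ : α → β} {t : Set β} (hφ : MapsTo φ M.E t) (ht : t.encard ≤ (r - 1 : ℕ)) :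
    (partitionOn M.E φ).Reduction M := by
  refine ⟨rfl, fun I hI ↦ ?_⟩
  obtain ⟨hinj, hIE⟩ := partitionOn_indep_iff.1 hI
  refine hM.2 I hIE ?_
  calc I.encard = (φ '' I).encard := hinj.encard_image.symm
    _ ≤ t.encard := encard_le_encard (image_subset_iff.2 fun x hx ↦ hφ (hIE hx))
    _ ≤ (r - 1 : ℕ) := ht

end Matroid

lemma Set.exists_mapsTo_Iio_encard_fiber_le {E : Set α} {d b : ℕ} (hE : E.encard ≤ d * b) :
    ∃ φ : α → ℕ, MapsTo φ E (Iio d) ∧ ∀ i, (E ∩ φ ⁻¹' {i}).encard ≤ b := by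
  have hfin : E.Finite := finite_of_encard_le_coe (by exact_mod_cast hE)
  have hcard : (Iio d ×ˢ Iio b).encard = d * b := by
    rw [encard_prod, ← Nat.encard_range, ← Nat.encard_range]
    rfl
  obtain ⟨f, hfE, hinj⟩ := hfin.exists_injOn_of_encard_le (hE.trans hcard.ge)
  refine ⟨Prod.fst ∘ f, fun x hx ↦ (hfE hx).1, fun i ↦ ?_⟩
  have hsnd : InjOn (Prod.snd ∘ f) (E ∩ (Prod.fst ∘ f) ⁻¹' {i}) := fun x hx y hy hxy ↦
    hinj hx.1 hy.1 (Prod.ext (hx.2.trans hy.2.symm) hxy)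
  calc (E ∩ (Prod.fst ∘ f) ⁻¹' {i}).encard
      = (Prod.snd ∘ f '' (E ∩ (Prod.fst ∘ f) ⁻¹' {i})).encard := hsnd.encard_image.symm
    _ ≤ (Iio b).encard := encard_le_encard <| image_subset_iff.2 fun x hx ↦ (hfE hx.1).2
    _ = b := Nat.encard_range b

theorem statement_6_general (M : Matroid α) (r k : ℕ) (hr : 2 ≤ r)
    (hpav : M.IsPavingOfRank r) (hcol : M.IsColorable k) :
    ∃ (N : Matroid α) (P : Set (Set α)), N.IsPartitionMatroid P ∧ N.Reduction M ∧
      ∀ c ∈ P, c.encard ≤ (((r * k + r - 2) / (r - 1) : ℕ) : ℕ∞) := by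
  have hceil : (r * k + r - 2) / (r - 1) = (r * k) ⌈/⌉ (r - 1) := by
    rw [Nat.ceilDiv_eq_add_pred_div]
    congr 1
    omega
  have hE : M.E.encard ≤ ((r - 1 : ℕ) : ℕ∞) * ((r * k + r - 2) / (r - 1) : ℕ) := by
    calc M.E.encard ≤ k * M.rkE := hcol.encard_ground_le
      _ = (r * k : ℕ) := by rw [hpav.1]; push_cast; ring
      _ ≤ _ := by
        rw [hceil, ← Nat.cast_mul]
        exact_mod_cast le_smul_ceilDiv (by omega : 0 < r - 1)
  obtain ⟨φ, hφE, hφ⟩ := exists_mapsTo_Iio_encard_fiber_le hE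
  refine ⟨_, _, Matroid.partitionOn_isPartitionMatroid M.E φ,
    hpav.reduction_partitionOn hφE (Nat.encard_range _).le, ?_⟩
  rintro _ ⟨i, rfl⟩
  exact hφ i

/-- A `k`-colorable paving matroid of rank `r ≥ 2` can be reduced to a
`⌈rk/(r-1)⌉`-colorable partition matroid. -/
theorem statement_6 (M : Matroid α) (hfin : M.E.Finite) (r k : ℕ) (hr : 2 ≤ r)
    (hpav : M.IsPavingOfRank r) (hcol : M.IsColorable k) :
    ∃ (N : Matroid α) (P : Set (Set α)), N.IsPartitionMatroid P ∧ N.Reduction M ∧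
      ∀ c ∈ P, c.encard ≤ (((r * k + r - 2) / (r - 1) : ℕ) : ℕ∞) :=
  statement_6_general M r k hr hpav hcol
end

section
/- Let S be a set of size 2k partitioned as S = S_1 ∪ S_2 ∪ S_3 with ⌈2k/3⌉ = |S_1| ≥ |S_2| ≥ |S_3| = ⌊2k/3⌋, and let M = (S, I) be the matroid in which X ⊆ S is independent if and only if |X| ≤ 2 and |X ∩ S_i| ≤ 1 for i = 1, 2, 3. Then M is a k-colorable matroid of rank 2, and every partition matroid N with N ⪯ M satisfies χ(N) ≥ ⌊4k/3⌋. -/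
open Set

variable {α : Type*}

/-!
Listing the ground set block by block as `x₀, …, x₂ₖ₋₁`, each pair `{xᵢ, xᵢ₊ₖ}` meets two
different blocks, because no block has more than `k` elements; these `k` pairs are independent
and colour `M`. A partition matroid `N ⪯ M` puts each block `Sᵢ` inside a single class, since two
elements of `Sᵢ` are dependent in `M`, and it cannot have three classes meeting the ground set,
since one element from each would be independent of size `3`. Hence some class contains two
blocks, and so at least `|S₂| + |S₃| ≥ ⌊4k/3⌋` elements.
-/

section Sorting

open Finset

theorem Monotone.apply_ne_of_card_fiber_le {β : Type*} [LinearOrder β] {n k : ℕ}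
    {u : Fin n → β} (hu : Monotone u) (hfib : ∀ b, #{m | u m = b} ≤ k) {i j : Fin n}
    (hij : (i : ℕ) + k ≤ j) : u i ≠ u j := by
  intro heq
  have hsub : Finset.Icc i j ⊆ ({m | u m = u i} : Finset (Fin n)) := by
    intro m hm
    obtain ⟨him, hmj⟩ := Finset.mem_Icc.1 hm
    simpa using le_antisymm (heq ▸ hu hmj) (hu him)
  have hcard := (Finset.card_le_card hsub).trans (hfib (u i))
  rw [Fin.card_Icc] at hcard
  omega

theorem Finset.exists_monotone_enum {β : Type*} [LinearOrder β] (f : α → β) (s : Finset α)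
    {n : ℕ} (hn : #s = n) :
    ∃ g : Fin n → α, Function.Injective g ∧ (∀ m, g m ∈ s) ∧ (∀ x ∈ s, ∃ m, g m = x) ∧
      Monotone (f ∘ g) := by
  subst hn
  set e : Fin #s → α := Subtype.val ∘ s.equivFin.symm
  have he : Function.Injective e := Subtype.val_injective.comp s.equivFin.symm.injective
  refine ⟨e ∘ Tuple.sort (f ∘ e), he.comp (Tuple.sort _).injective, fun m => by simp [e],
    fun x hx => ⟨(Tuple.sort (f ∘ e)).symm (s.equivFin ⟨x, hx⟩), by simp [e]⟩,
    Tuple.monotone_sort (f ∘ e)⟩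

theorem Matroid.isColorable_of_indep_pair {β : Type*} [LinearOrder β] {M : Matroid α} {k : ℕ}
    (f : α → β) (hE : M.E.encard = ((k + k : ℕ) : ℕ∞))
    (hfib : ∀ b, (M.E ∩ f ⁻¹' {b}).encard ≤ k)
    (hpair : ∀ x ∈ M.E, ∀ y ∈ M.E, f x ≠ f y → M.Indep {x, y}) : M.IsColorable k := by
  classical
  obtain ⟨s, hs⟩ := (Set.finite_of_encard_eq_coe hE).exists_finset_coe
  rw [← hs] at hE hfib hpair
  have hcard : #s = k + k := by
    rw [encard_coe_eq_coe_finsetCard] at hE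
    exact_mod_cast hE
  obtain ⟨g, hinj, hmem, hsurj, hmono⟩ := s.exists_monotone_enum f hcard
  have hfib' : ∀ b, #{m | (f ∘ g) m = b} ≤ k := fun b => by
    have hle := card_le_card_of_injOn g (s := {m | (f ∘ g) m = b}) (t := {x ∈ s | f x = b})
      (fun m hm => by simp_all) hinj.injOn
    have hb : ((#{x ∈ s | f x = b} : ℕ) : ℕ∞) ≤ k := by
      rw [← encard_coe_eq_coe_finsetCard]
      convert hfib b using 2
      ext; simp
    exact hle.trans (by exact_mod_cast hb)
  have hne (i : Fin k) : f (g (Fin.castAdd k i)) ≠ f (g (Fin.natAdd k i)) :=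
    hmono.apply_ne_of_card_fiber_le hfib' (by simp)
  refine ⟨fun i => {g (Fin.castAdd k i), g (Fin.natAdd k i)},
    fun i => hpair _ (hmem _) _ (hmem _) (hne i), ?_, ?_⟩
  · rw [← hs]
    apply subset_antisymm
    · simp [Set.insert_subset_iff, hmem]
    · intro x hx
      obtain ⟨m, rfl⟩ := hsurj x hx
      induction m using Fin.addCases with
      | left i => exact mem_iUnion.2 ⟨i, by simp⟩
      | right i => exact mem_iUnion.2 ⟨i, by simp⟩
  · intro i j hij
    have := Fin.val_ne_iff.2 hij
    simp only [Fin.natAdd_eq_addNat, disjoint_insert_right, mem_insert_iff, hinj.eq_iff,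
      Fin.ext_iff, Fin.val_castAdd, mem_singleton_iff, Fin.val_addNat, not_or,
      Set.disjoint_singleton_right, Nat.add_right_cancel_iff]
    omega

end Sorting

theorem Set.encard_pair_inter_le_one {x y : α} {T : Set α} (h : x ∈ T → y ∈ T → x = y) :
    ({x, y} ∩ T).encard ≤ 1 :=
  encard_le_one_iff.2 <| by
    rintro a b ⟨rfl | rfl, ha⟩ ⟨rfl | rfl, hb⟩
    exacts [rfl, h ha hb, (h hb ha).symm, rfl]

theorem Set.encard_add_le_of_union_subset {T₁ T₂ T₃ c : Set α} (h12 : Disjoint T₁ T₂)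
    (h13 : Disjoint T₁ T₃) (h23 : Disjoint T₂ T₃) (h21 : T₂.encard ≤ T₁.encard)
    (h32 : T₃.encard ≤ T₂.encard) (hc : T₁ ∪ T₂ ⊆ c ∨ T₁ ∪ T₃ ⊆ c ∨ T₂ ∪ T₃ ⊆ c) :
    T₂.encard + T₃.encard ≤ c.encard := by
  rcases hc with hc | hc | hc
  · calc T₂.encard + T₃.encard ≤ T₁.encard + T₂.encard := add_le_add h21 h32
      _ = (T₁ ∪ T₂).encard := (encard_union_eq h12).symm
      _ ≤ c.encard := encard_mono hc
  · calc T₂.encard + T₃.encard ≤ T₁.encard + T₃.encard := add_le_add_left h21 _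
      _ = (T₁ ∪ T₃).encard := (encard_union_eq h13).symm
      _ ≤ c.encard := encard_mono hc
  · exact (encard_union_eq h23).symm.trans_le (encard_mono hc)

open Classical in
noncomputable def blockIndex (S₁ S₂ : Set α) (x : α) : ℕ :=
  if x ∈ S₁ then 0 else if x ∈ S₂ then 1 else 2

section blockIndex

variable {S₁ S₂ S₃ : Set α} {x : α}

theorem blockIndex_of_mem₁ (hx : x ∈ S₁) : blockIndex S₁ S₂ x = 0 := by
  simp [blockIndex, hx]

theorem blockIndex_of_mem₂ (h12 : Disjoint S₁ S₂) (hx : x ∈ S₂) :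
    blockIndex S₁ S₂ x = 1 := by
  simp [blockIndex, hx, disjoint_right.1 h12 hx]

theorem blockIndex_of_mem₃ (h13 : Disjoint S₁ S₃) (h23 : Disjoint S₂ S₃) (hx : x ∈ S₃) :
    blockIndex S₁ S₂ x = 2 := by
  simp [blockIndex, disjoint_right.1 h13 hx, disjoint_right.1 h23 hx]

theorem encard_pair_inter_le_one_of_blockIndex_ne (h12 : Disjoint S₁ S₂) (h13 : Disjoint S₁ S₃)
    (h23 : Disjoint S₂ S₃) {y : α} (hxy : blockIndex S₁ S₂ x ≠ blockIndex S₁ S₂ y) :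
    ({x, y} ∩ S₁).encard ≤ 1 ∧ ({x, y} ∩ S₂).encard ≤ 1 ∧ ({x, y} ∩ S₃).encard ≤ 1 := by
  have hblock (T : Set α) (c : ℕ) (hc : ∀ z ∈ T, blockIndex S₁ S₂ z = c) :
      ({x, y} ∩ T).encard ≤ 1 :=
    encard_pair_inter_le_one fun hxT hyT => absurd ((hc x hxT).trans (hc y hyT).symm) hxy
  exact ⟨hblock S₁ 0 fun _ => blockIndex_of_mem₁, hblock S₂ 1 fun _ => blockIndex_of_mem₂ h12,
    hblock S₃ 2 fun _ => blockIndex_of_mem₃ h13 h23⟩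

theorem encard_inter_preimage_blockIndex_le {m : ℕ∞} (h₁ : S₁.encard ≤ m) (h₂ : S₂.encard ≤ m)
    (h₃ : S₃.encard ≤ m) (b : ℕ) : ((S₁ ∪ S₂ ∪ S₃) ∩ blockIndex S₁ S₂ ⁻¹' {b}).encard ≤ m := by
  have hsub : (S₁ ∪ S₂ ∪ S₃) ∩ blockIndex S₁ S₂ ⁻¹' {b} ⊆
      if b = 0 then S₁ else if b = 1 then S₂ else S₃ := by
    rintro x ⟨hx, rfl⟩
    unfold blockIndex
    split_ifs <;> simp_all
  refine (encard_mono hsub).trans ?_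
  split_ifs
  exacts [h₁, h₂, h₃]

end blockIndex

theorem Matroid.rkE_eq_of_indep {M : Matroid α} {r : ℕ∞} (hle : ∀ I, M.Indep I → I.encard ≤ r)
    {I : Set α} (hI : M.Indep I) (hIr : I.encard = r) : M.rkE = r :=
  le_antisymm (iSup₂_le hle) (hIr ▸ le_iSup₂ (f := fun I (_ : M.Indep I) => I.encard) I hI)

namespace Matroid.IsPartitionMatroid

variable {N M : Matroid α} {P : Set (Set α)}

theorem eq_of_mem (hN : N.IsPartitionMatroid P) {c d : Set α} {x : α} (hc : c ∈ P) (hd : d ∈ P)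
    (hxc : x ∈ c) (hxd : x ∈ d) : c = d := by
  by_contra hcd
  exact disjoint_left.1 (hN.2.1 c hc d hd hcd) hxc hxd

theorem indep_of_injOn (hN : N.IsPartitionMatroid P) {cl : α → Set α} {X : Set α}
    (hcl : ∀ x ∈ X, cl x ∈ P ∧ x ∈ cl x) (hinj : InjOn cl X) : N.Indep X := by
  refine (hN.2.2 X).2 ⟨fun x hx => hN.1 ▸ mem_sUnion_of_mem (hcl x hx).2 (hcl x hx).1,
    fun c hc => encard_le_one_iff.2 fun a b ha hb => hinj ha.1 hb.1 ?_⟩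
  exact (hN.eq_of_mem (hcl a ha.1).1 hc (hcl a ha.1).2 ha.2).trans
    (hN.eq_of_mem (hcl b hb.1).1 hc (hcl b hb.1).2 hb.2).symm

theorem indep_of_injOn_of_reduction (hN : N.IsPartitionMatroid P) (hNM : N.Reduction M)
    {cl : α → Set α} (hcl : ∀ x ∈ M.E, cl x ∈ P ∧ x ∈ cl x) {X : Set α} (hX : X ⊆ M.E)
    (hinj : InjOn cl X) : M.Indep X :=
  hNM.2 X (hN.indep_of_injOn (fun x hx => hcl x (hX hx)) hinj)

theorem subset_of_forall_indep_encard_inter_le_one (hN : N.IsPartitionMatroid P)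
    (hNM : N.Reduction M)
    {cl : α → Set α} (hcl : ∀ x ∈ M.E, cl x ∈ P ∧ x ∈ cl x) {T : Set α} (hTE : T ⊆ M.E)
    (hT : ∀ I, M.Indep I → (I ∩ T).encard ≤ 1) {x : α} (hx : x ∈ T) : T ⊆ cl x := by
  intro y hy
  by_cases hxy : cl x = cl y
  · exact hxy ▸ (hcl y (hTE hy)).2
  · have hI := hN.indep_of_injOn_of_reduction hNM hcl (pair_subset (hTE hx) (hTE hy))
      (injOn_pair.2 fun h => absurd h hxy)
    obtain rfl := encard_le_one_iff.1 (hT _ hI) x y ⟨mem_insert _ _, hx⟩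
      ⟨mem_insert_of_mem _ rfl, hy⟩
    exact absurd rfl hxy

theorem eq_or_eq_or_eq_of_reduction (hN : N.IsPartitionMatroid P) (hNM : N.Reduction M)
    (hrk : ∀ I, M.Indep I → I.encard ≤ 2) {cl : α → Set α}
    (hcl : ∀ x ∈ M.E, cl x ∈ P ∧ x ∈ cl x) {x y z : α} (hx : x ∈ M.E) (hy : y ∈ M.E)
    (hz : z ∈ M.E) : cl x = cl y ∨ cl x = cl z ∨ cl y = cl z := by
  by_contra! h
  have hI := hrk _ <| hN.indep_of_injOn_of_reduction hNM hcl (X := {x, y, z})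
    (by simp [insert_subset_iff, hx, hy, hz])
    (by rintro a (rfl | rfl | rfl) b (rfl | rfl | rfl) hab <;> grind)
  rw [encard_eq_three.2 ⟨x, y, z, ?_, ?_, ?_, rfl⟩] at hI
  · exact absurd hI (by norm_num)
  all_goals rintro rfl
  exacts [h.1 rfl, h.2.1 rfl, h.2.2 rfl]

theorem exists_superset_union_of_reduction (hN : N.IsPartitionMatroid P) (hNM : N.Reduction M)
    (hrk : ∀ I, M.Indep I → I.encard ≤ 2) {T₁ T₂ T₃ : Set α} (hE : T₁ ∪ T₂ ∪ T₃ ⊆ M.E)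
    (hT₁ : ∀ I, M.Indep I → (I ∩ T₁).encard ≤ 1) (hT₂ : ∀ I, M.Indep I → (I ∩ T₂).encard ≤ 1)
    (hT₃ : ∀ I, M.Indep I → (I ∩ T₃).encard ≤ 1)
    (hne : T₁.Nonempty) : ∃ c ∈ P, T₁ ∪ T₂ ⊆ c ∨ T₁ ∪ T₃ ⊆ c ∨ T₂ ∪ T₃ ⊆ c := by
  have hcover : ∀ x ∈ M.E, ∃ c, c ∈ P ∧ x ∈ c := by
    rw [← hNM.1, ← hN.1]
    exact fun x hx => mem_sUnion.1 hx
  choose! cl hcl using hcover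
  have hE₁ : T₁ ⊆ M.E := subset_union_left.trans (subset_union_left.trans hE)
  have hE₂ : T₂ ⊆ M.E := subset_union_right.trans (subset_union_left.trans hE)
  have hE₃ : T₃ ⊆ M.E := subset_union_right.trans hE
  obtain ⟨x₁, h₁⟩ := hne
  have hc₁ := hN.subset_of_forall_indep_encard_inter_le_one hNM hcl hE₁ hT₁ h₁
  have hP₁ := (hcl x₁ (hE₁ h₁)).1
  rcases T₂.eq_empty_or_nonempty with rfl | ⟨x₂, h₂⟩
  · exact ⟨cl x₁, hP₁, Or.inl (by simpa using hc₁)⟩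
  rcases T₃.eq_empty_or_nonempty with rfl | ⟨x₃, h₃⟩
  · exact ⟨cl x₁, hP₁, Or.inr (Or.inl (by simpa using hc₁))⟩
  have hc₂ := hN.subset_of_forall_indep_encard_inter_le_one hNM hcl hE₂ hT₂ h₂
  have hc₃ := hN.subset_of_forall_indep_encard_inter_le_one hNM hcl hE₃ hT₃ h₃
  rcases hN.eq_or_eq_or_eq_of_reduction hNM hrk hcl (hE₁ h₁) (hE₂ h₂) (hE₃ h₃) with h | h | h
  · exact ⟨cl x₁, hP₁, Or.inl (union_subset hc₁ (h ▸ hc₂))⟩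
  · exact ⟨cl x₁, hP₁, Or.inr (Or.inl (union_subset hc₁ (h ▸ hc₃)))⟩
  · exact ⟨cl x₂, (hcl x₂ (hE₂ h₂)).1, Or.inr (Or.inr (union_subset hc₂ (h ▸ hc₃)))⟩

end Matroid.IsPartitionMatroid

/-- The laminar matroid on a `2k`-element set `S = S₁ ∪ S₂ ∪ S₃` (classes of sizes
`⌈2k/3⌉ = |S₁| ≥ |S₂| ≥ |S₃| = ⌊2k/3⌋`), whose independent sets are the sets of size at
most `2` meeting each `Sᵢ` at most once, is a `k`-colorable matroid of rank `2`, and every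
partition matroid `N ⪯ M` has a class of size at least `⌊4k/3⌋`. -/
theorem statement_8 (k : ℕ) (hk : 1 ≤ k) (S S₁ S₂ S₃ : Set α)
    (hunion : S₁ ∪ S₂ ∪ S₃ = S)
    (h12 : Disjoint S₁ S₂) (h13 : Disjoint S₁ S₃) (h23 : Disjoint S₂ S₃)
    (hS : S.encard = ((2 * k : ℕ) : ℕ∞))
    (hS1 : S₁.encard = (((2 * k + 2) / 3 : ℕ) : ℕ∞))
    (hS3 : S₃.encard = ((2 * k / 3 : ℕ) : ℕ∞))
    (h21 : S₂.encard ≤ S₁.encard) (h32 : S₃.encard ≤ S₂.encard)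
    (M : Matroid α) (hE : M.E = S)
    (hInd : ∀ X, M.Indep X ↔ X ⊆ S ∧ X.encard ≤ 2 ∧
      (X ∩ S₁).encard ≤ 1 ∧ (X ∩ S₂).encard ≤ 1 ∧ (X ∩ S₃).encard ≤ 1) :
    M.IsColorable k ∧ M.rkE = 2 ∧
      ∀ (N : Matroid α) (P : Set (Set α)), N.IsPartitionMatroid P → N.Reduction M →
        ∃ c ∈ P, ((4 * k / 3 : ℕ) : ℕ∞) ≤ c.encard := by
  subst hE
  obtain ⟨n₂, hS2⟩ := ENat.ne_top_iff_exists.1 (ne_top_of_le_ne_top (by simp [hS1]) h21)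
  have hsum : (2 * k + 2) / 3 + n₂ + 2 * k / 3 = 2 * k := by
    rw [← hunion, encard_union_eq (disjoint_union_left.2 ⟨h13, h23⟩), encard_union_eq h12,
      hS1, ← hS2, hS3] at hS
    exact_mod_cast hS
  have hS1k : S₁.encard ≤ k := by rw [hS1]; exact_mod_cast (by omega)
  have hrk : ∀ I, M.Indep I → I.encard ≤ 2 := fun I hI => ((hInd I).1 hI).2.1
  have hpair : ∀ x ∈ M.E, ∀ y ∈ M.E, blockIndex S₁ S₂ x ≠ blockIndex S₁ S₂ y →
      M.Indep {x, y} := fun x hx y hy hxy =>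
    (hInd _).2 ⟨pair_subset hx hy, (encard_insert_le _ _).trans_eq (by rw [encard_singleton]; rfl),
      encard_pair_inter_le_one_of_blockIndex_ne h12 h13 h23 hxy⟩
  obtain ⟨x₁, h₁⟩ := nonempty_of_encard_ne_zero (s := S₁) (by simp [hS1]; omega)
  refine ⟨?_, ?_, ?_⟩
  · refine M.isColorable_of_indep_pair (blockIndex S₁ S₂) (by rw [hS]; congr 1; omega)
      (hunion ▸ encard_inter_preimage_blockIndex_le hS1k (h21.trans hS1k)
        (h32.trans (h21.trans hS1k))) hpair
  · obtain ⟨x₂, h₂⟩ := nonempty_of_encard_ne_zero (s := S₂) (by rw [← hS2]; norm_cast; lia)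
    have hne : blockIndex S₁ S₂ x₁ ≠ blockIndex S₁ S₂ x₂ := by
      simp [blockIndex_of_mem₁ h₁, blockIndex_of_mem₂ h12 h₂]
    exact M.rkE_eq_of_indep hrk
      (hpair x₁ (hunion ▸ .inl (.inl h₁)) x₂ (hunion ▸ .inl (.inr h₂)) hne)
      (encard_pair fun h => hne (h ▸ rfl))
  · rintro N P hN hNM
    obtain ⟨c, hc, hcases⟩ := hN.exists_superset_union_of_reduction hNM hrk hunion.subset
      (fun X hX => ((hInd X).1 hX).2.2.1) (fun X hX => ((hInd X).1 hX).2.2.2.1)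
      (fun X hX => ((hInd X).1 hX).2.2.2.2) ⟨x₁, h₁⟩
    refine ⟨c, hc, le_trans ?_ (encard_add_le_of_union_subset h12 h13 h23 h21 h32 hcases)⟩
    rw [← hS2, hS3]
    exact_mod_cast (by omega)
end

section
/- Let r ≥ 2, let H = {H_1, …, H_q} be a (possibly empty) family of proper subsets of a set S with |S| ≥ r, |H_i| ≥ r for all i and |H_i ∩ H_j| ≤ r−2 for i ≠ j, and let M = (S, I) be the paving matroid of rank r whose bases are the r-element subsets of S not contained in any H_i. Then χ(M) = max{⌈|S|/r⌉, ⌈|H_1|/(r−1)⌉, …, ⌈|H_q|/(r−1)⌉}. -/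
/-!
An independent set of `M` has at most `r` points and at most `r - 1` points in each `H ∈ 𝓗`,
and conversely these two conditions characterise independence. Counting gives the lower bound
`|S| ≤ k r`, `|H| ≤ k (r - 1)` for a partition into `k` independent sets.

For the upper bound, colour `S` with `k` colours so that every class has at most `r` points and
the number of bad classes (`r` points inside some `H`) is minimal. If `C ⊆ H` is bad, then since
`|H| ≤ k (r - 1)` some other class `D` has at most `r - 2` points in `H`. Move a point `x ∈ C`
into `D`, or, if `|D| = r`, swap it with a point `y ∈ D \ H`. Since two members of `𝓗` share at
most `r - 2` points, the `(r - 1)`-set that `x` joins lies in at most one `H'`, and `x` can be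
chosen outside it; then neither new class is bad, contradicting minimality.
-/

open Set

variable {α : Type*}

open Finset

namespace Finset

variable [DecidableEq α]

/-- The independent sets of the paving matroid whose hyperplanes of size `≥ r` are `Hs`. -/
def PavingIndep (Hs : Set (Finset α)) (r : ℕ) (T : Finset α) : Prop :=
  #T ≤ r ∧ ∀ H ∈ Hs, #(T ∩ H) < r

variable {Hs : Set (Finset α)} {r : ℕ}

lemma pavingIndep_of_card_lt {T : Finset α} (hT : #T < r) : PavingIndep Hs r T :=
  ⟨hT.le, fun _ _ => (card_le_card inter_subset_left).trans_lt hT⟩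

lemma pavingIndep_insert {D : Finset α} {x : α} (hD : #D < r)
    (hx : ∀ H ∈ Hs, x ∈ H → #(D ∩ H) + 1 < r) : PavingIndep Hs r (insert x D) := by
  refine ⟨(card_insert_le x D).trans hD, fun H hH => ?_⟩
  by_cases hxH : x ∈ H
  · rw [insert_inter_of_mem hxH]
    exact (card_insert_le _ _).trans_lt (hx H hH hxH)
  · rw [insert_inter_of_notMem hxH]
    exact (card_le_card inter_subset_left).trans_lt hD

lemma exists_mem_forall_card_inter_add_one_lt
    (hint : Hs.Pairwise fun H₁ H₂ => #(H₁ ∩ H₂) ≤ r - 2) {P D H : Finset α} (hH : H ∈ Hs)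
    (hPH : P ⊆ H) (hP : #P = r) (hD : #D < r) (hDH : #(D ∩ H) + 1 < r) :
    ∃ x ∈ P, ∀ H' ∈ Hs, x ∈ H' → #(D ∩ H') + 1 < r := by
  -- an `(r - 1)`-set lies in at most one member of `Hs`; `x` is chosen outside it
  have subset_of_le {H'} (h : r ≤ #(D ∩ H') + 1) : D ⊆ H' :=
    inter_eq_left.1 (eq_of_subset_of_card_le inter_subset_left (by omega))
  by_cases h : ∃ H₂ ∈ Hs, r ≤ #(D ∩ H₂) + 1
  · obtain ⟨H₂, hH₂, hDH₂⟩ := h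
    have hne : H ≠ H₂ := by rintro rfl; omega
    obtain ⟨x, hxP, hxH₂⟩ : ∃ x ∈ P, x ∉ H₂ := by
      by_contra! hPH₂
      have := card_le_card (subset_inter hPH hPH₂)
      have := hint hH hH₂ hne
      omega
    refine ⟨x, hxP, fun H' hH' hxH' => ?_⟩
    by_contra! hDH'
    have hne' : H₂ ≠ H' := by rintro rfl; exact hxH₂ hxH'
    have := card_le_card (subset_inter (subset_of_le hDH₂) (subset_of_le hDH'))
    have := card_le_card (inter_subset_left : D ∩ H₂ ⊆ D)
    have := hint hH₂ hH' hne'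
    omega
  · push Not at h
    obtain ⟨x, hx⟩ : P.Nonempty := card_pos.1 (by omega)
    exact ⟨x, hx, fun H' hH' _ => h H' hH'⟩

theorem exists_pavingIndep_split (hint : Hs.Pairwise fun H₁ H₂ => #(H₁ ∩ H₂) ≤ r - 2)
    {P Q H : Finset α} (hH : H ∈ Hs) (hPH : P ⊆ H) (hP : #P = r) (hQ : #Q ≤ r)
    (hQH : #(Q ∩ H) + 2 ≤ r) (hPQ : Disjoint P Q) :
    ∃ P' Q', Disjoint P' Q' ∧ P' ∪ Q' = P ∪ Q ∧ PavingIndep Hs r P' ∧ PavingIndep Hs r Q' := by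
  rcases hQ.lt_or_eq with hQ | hQ
  · obtain ⟨x, hxP, hx⟩ := exists_mem_forall_card_inter_add_one_lt hint hH hPH hP hQ (by omega)
    refine ⟨P.erase x, insert x Q, ?_, ?_, pavingIndep_of_card_lt ?_, pavingIndep_insert hQ hx⟩
    · simp only [disjoint_left, mem_erase, mem_insert] at hPQ ⊢; grind
    · ext a; simp only [mem_union, mem_erase, mem_insert]; grind
    · rw [card_erase_of_mem hxP]; omega
  · obtain ⟨y, hyQ, hyH⟩ : ∃ y ∈ Q, y ∉ H := by
      by_contra! hQH'
      rw [inter_eq_left.2 hQH'] at hQH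
      omega
    have hD : #(Q.erase y) < r := by rw [card_erase_of_mem hyQ]; omega
    have hDH : #(Q.erase y ∩ H) + 1 < r := by
      have := card_le_card (inter_subset_inter (erase_subset y Q) (Subset.refl H))
      omega
    obtain ⟨x, hxP, hx⟩ := exists_mem_forall_card_inter_add_one_lt hint hH hPH hP hD hDH
    refine ⟨insert y (P.erase x), insert x (Q.erase y), ?_, ?_,
      pavingIndep_insert ?_ fun H' hH' hyH' => ?_, pavingIndep_insert hD hx⟩
    · simp only [disjoint_left, mem_erase, mem_insert] at hPQ ⊢; grind
    · ext a; simp only [mem_union, mem_erase, mem_insert]; grind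
    · rw [card_erase_of_mem hxP]; omega
    · have hne : H ≠ H' := by rintro rfl; exact hyH hyH'
      have := card_le_card (inter_subset_inter ((erase_subset x P).trans hPH) (Subset.refl H'))
      have := hint hH hH' hne
      omega

lemma exists_coloring_card_le (hr : 0 < r) (S : Finset α) {k : ℕ} (hS : #S ≤ k * r) :
    ∃ f : α → ℕ, (∀ a ∈ S, f a < k) ∧ ∀ i, #{a ∈ S | f a = i} ≤ r := by
  let idx : α → ℕ := fun a => if h : a ∈ S then S.equivFin ⟨a, h⟩ else 0
  have hidx : ∀ a ∈ S, idx a < #S := fun a ha => by simp [idx, ha]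
  refine ⟨fun a => idx a / r,
    fun a ha => (Nat.div_lt_iff_lt_mul hr).2 ((hidx a ha).trans_le hS), fun i => ?_⟩
  calc #{a ∈ S | idx a / r = i} ≤ #(Ico (i * r) (i * r + r)) :=
        card_le_card_of_injOn idx (fun a ha => ?_) (fun a ha b hb hab => ?_)
    _ = r := by simp
  · have := (Nat.div_eq_iff hr).1 (mem_filter.1 ha).2
    simp only [coe_Ico, Set.mem_Ico]
    omega
  · have ha := (mem_filter.1 ha).1
    have hb := (mem_filter.1 hb).1
    simpa [idx, ha, hb, Fin.val_inj] using hab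

lemma exists_card_filter_inter_add_two_le (hr : 0 < r) {S H : Finset α} {f : α → ℕ}
    {k i₀ : ℕ} (hH : #H ≤ k * (r - 1))
    (hi₀H : {a ∈ S | f a = i₀} ⊆ H) (hi₀ : #{a ∈ S | f a = i₀} = r) :
    ∃ j < k, j ≠ i₀ ∧ #({a ∈ S | f a = j} ∩ H) + 2 ≤ r := by
  -- Pigeonhole on `H` minus a point `x₀` of the full class: the class of `x₀` still has
  -- `r - 1` points there, so the sparse class found is another one.
  obtain ⟨x₀, hx₀⟩ : ({a ∈ S | f a = i₀}).Nonempty := card_pos.1 (by omega)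
  have hx₀SH : x₀ ∈ S ∩ H := mem_inter.2 ⟨(mem_filter.1 hx₀).1, hi₀H hx₀⟩
  have hlt : #((S ∩ H).erase x₀) < #(range k) * (r - 1) := by
    have := card_le_card (inter_subset_right : S ∩ H ⊆ H)
    have := card_pos.2 ⟨x₀, hx₀SH⟩
    rw [card_erase_of_mem hx₀SH, card_range]
    omega
  obtain ⟨j, hj, hfib⟩ := exists_card_fiber_lt_of_card_lt_mul (f := f) hlt
  have hcard := card_le_card (s := ({a ∈ S | f a = j} ∩ H).erase x₀)
    (t := {a ∈ (S ∩ H).erase x₀ | f a = j}) fun a => by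
      simp only [mem_erase, mem_inter, mem_filter]
      tauto
  have hji₀ : j ≠ i₀ := by
    rintro rfl
    rw [inter_eq_left.2 hi₀H, card_erase_of_mem hx₀, hi₀] at hcard
    omega
  have hx₀j : x₀ ∉ {a ∈ S | f a = j} ∩ H := by
    simp [(mem_filter.1 hx₀).2, hji₀.symm]
  rw [erase_eq_of_notMem hx₀j] at hcard
  exact ⟨j, mem_range.1 hj, hji₀, by omega⟩

lemma filter_recolor_eq {S P Q : Finset α} {f : α → ℕ} {i₀ j : ℕ} (hij : i₀ ≠ j)
    (hPQ : Disjoint P Q) (hPQS : P ∪ Q = {a ∈ S | f a = i₀} ∪ {a ∈ S | f a = j}) (i : ℕ) :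
    {a ∈ S | (if a ∈ P then i₀ else if a ∈ Q then j else f a) = i} =
      if i = i₀ then P else if i = j then Q else {a ∈ S | f a = i} := by
  ext a
  have ha := congrArg (a ∈ ·) hPQS
  simp only [mem_union, mem_filter, eq_iff_iff] at ha
  rw [disjoint_left] at hPQ
  split_ifs <;> simp only [mem_filter] <;> grind

lemma exists_recoloring_pavingIndep (hr : 0 < r)
    (hint : Hs.Pairwise fun H₁ H₂ => #(H₁ ∩ H₂) ≤ r - 2) {S : Finset α} {k : ℕ}
    (hHs : ∀ H ∈ Hs, #H ≤ k * (r - 1)) {f : α → ℕ} (hf : ∀ a ∈ S, f a < k)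
    (hfr : ∀ i, #{a ∈ S | f a = i} ≤ r) {i₀ : ℕ}
    (hi₀ : ¬PavingIndep Hs r {a ∈ S | f a = i₀}) :
    ∃ g : α → ℕ, (∀ a ∈ S, g a < k) ∧ (∀ i, #{a ∈ S | g a = i} ≤ r) ∧
      PavingIndep Hs r {a ∈ S | g a = i₀} ∧
      ∀ i, PavingIndep Hs r {a ∈ S | f a = i} → PavingIndep Hs r {a ∈ S | g a = i} := by
  obtain ⟨H, hH, hrH⟩ : ∃ H ∈ Hs, r ≤ #({a ∈ S | f a = i₀} ∩ H) := by
    simpa [PavingIndep, hfr i₀] using hi₀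
  have hC : #{a ∈ S | f a = i₀} = r :=
    le_antisymm (hfr i₀) (hrH.trans (card_le_card inter_subset_left))
  have hCH : {a ∈ S | f a = i₀} ⊆ H :=
    inter_eq_left.1 (eq_of_subset_of_card_le inter_subset_left (by omega))
  have hi₀k : i₀ < k := by
    obtain ⟨b, hb⟩ : ({a ∈ S | f a = i₀}).Nonempty := card_pos.1 (by omega)
    exact (mem_filter.1 hb).2 ▸ hf b (mem_filter.1 hb).1
  obtain ⟨j, hjk, hji₀, hj⟩ := exists_card_filter_inter_add_two_le hr (hHs H hH) hCH hC
  obtain ⟨P, Q, hPQ, hPQS, hP, hQ⟩ := exists_pavingIndep_split hint hH hCH hC (hfr j) hj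
    (disjoint_filter.2 fun _ _ h₁ h₂ => hji₀ (h₂.symm.trans h₁))
  have hclass := filter_recolor_eq hji₀.symm hPQ hPQS
  refine ⟨fun a => if a ∈ P then i₀ else if a ∈ Q then j else f a, fun a ha => ?_,
    fun i => ?_, by rw [hclass, if_pos rfl]; exact hP, fun i hi => ?_⟩
  · dsimp only
    split_ifs
    exacts [hi₀k, hjk, hf a ha]
  · rw [hclass]
    split_ifs
    exacts [hP.1, hQ.1, hfr i]
  · rw [hclass]
    split_ifs
    exacts [hP, hQ, hi]

theorem exists_coloring_pavingIndep (hr : 0 < r)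
    (hint : Hs.Pairwise fun H₁ H₂ => #(H₁ ∩ H₂) ≤ r - 2) {S : Finset α} {k : ℕ}
    (hS : #S ≤ k * r) (hHs : ∀ H ∈ Hs, #H ≤ k * (r - 1)) :
    ∃ f : α → ℕ, (∀ a ∈ S, f a < k) ∧ ∀ i, PavingIndep Hs r {a ∈ S | f a = i} := by
  classical
  obtain ⟨f, hf, hfr⟩ := exists_coloring_card_le hr S hS
  induction hn : #{i ∈ range k | ¬PavingIndep Hs r {a ∈ S | f a = i}}
    using Nat.strong_induction_on generalizing f with
  | _ n ih =>
    by_cases hbad : ∃ i₀ < k, ¬PavingIndep Hs r {a ∈ S | f a = i₀}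
    · obtain ⟨i₀, hi₀k, hi₀⟩ := hbad
      obtain ⟨g, hg, hgr, hgi₀, hfg⟩ := exists_recoloring_pavingIndep hr hint hHs hf hfr hi₀
      refine ih _ (hn ▸ card_lt_card ((ssubset_iff_of_subset fun i => ?_).2 ⟨i₀, ?_, ?_⟩))
        g hg hgr rfl
      · simp only [mem_filter]
        exact fun ⟨hi, h⟩ => ⟨hi, fun h' => h (hfg i h')⟩
      · exact mem_filter.2 ⟨mem_range.2 hi₀k, hi₀⟩
      · simp [hgi₀]
    · push Not at hbad
      refine ⟨f, hf, fun i => ?_⟩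
      rcases lt_or_ge i k with hi | hi
      · exact hbad i hi
      · have hempty : {a ∈ S | f a = i} = ∅ :=
          filter_eq_empty_iff.2 fun a ha h => by have := hf a ha; omega
        exact pavingIndep_of_card_lt (by simpa [hempty])

end Finset

namespace Matroid

lemma IsColorable.encard_le_mul {M : Matroid α} {j : ℕ} (hM : M.IsColorable j) {X : Set α}
    (hX : X ⊆ M.E) {m : ℕ∞} (hm : ∀ I, M.Indep I → (X ∩ I).encard ≤ m) : X.encard ≤ j * m := by
  obtain ⟨I, hI, hIE, -⟩ := hM
  calc X.encard = (⋃ i, X ∩ I i).encard := by rw [← Set.inter_iUnion, hIE, Set.inter_eq_left.2 hX]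
    _ ≤ ∑ i, (X ∩ I i).encard := Set.encard_iUnion_le_of_fintype _
    _ ≤ ∑ _i : Fin j, m := Finset.sum_le_sum fun i _ => hm _ (hI i)
    _ = j * m := by simp

lemma isColorable_of_indep_filter {M : Matroid α} {k : ℕ} (f : α → ℕ)
    (hf : ∀ a ∈ M.E, f a < k) (hind : ∀ i, M.Indep {a ∈ M.E | f a = i}) : M.IsColorable k := by
  refine ⟨fun i => {a ∈ M.E | f a = i}, fun i => hind i, ?_, fun i j hij => ?_⟩
  · ext a
    simp only [Set.mem_iUnion]
    exact ⟨fun ⟨_, ha, _⟩ => ha, fun ha => ⟨⟨f a, hf a ha⟩, ha, rfl⟩⟩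
  · exact Set.disjoint_left.2 fun a ha hb => hij (Fin.ext (ha.2.symm.trans hb.2))

lemma indep_iff_encard_inter_lt {M : Matroid α} {S : Set α} {r : ℕ} {𝓗 : Set (Set α)}
    (hE : M.E = S) (hpav : M.IsPavingOfRank r)
    (hBase : ∀ B, M.IsBase B ↔ B ⊆ S ∧ B.encard = r ∧ ∀ H ∈ 𝓗, ¬B ⊆ H) {I : Set α} :
    M.Indep I ↔ I ⊆ S ∧ I.encard ≤ r ∧ ∀ H ∈ 𝓗, (I ∩ H).encard < r := by
  refine ⟨fun hI => ?_, fun ⟨hIS, hIr, hIH⟩ => ?_⟩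
  · obtain ⟨B, hB, hIB⟩ := hI.exists_isBase_superset
    obtain ⟨hBS, hBr, hBH⟩ := (hBase B).1 hB
    refine ⟨hIB.trans hBS, hBr ▸ Set.encard_le_encard hIB, fun H hH => ?_⟩
    calc (I ∩ H).encard ≤ (B ∩ H).encard := Set.encard_le_encard (Set.inter_subset_inter_left H hIB)
      _ < B.encard := ((Set.finite_of_encard_eq_coe hBr).inter_of_left H).encard_lt_encard
          (Set.inter_subset_left.ssubset_of_not_superset
            fun h => hBH H hH (h.trans Set.inter_subset_right))
      _ = r := hBr
  · rcases hIr.lt_or_eq with hlt | heq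
    · exact hpav.2 I (hE ▸ hIS) (by simpa using ENat.le_sub_one_of_lt hlt)
    · refine ((hBase I).2 ⟨hIS, heq, fun H hH hIH' => ?_⟩).indep
      have := hIH H hH
      rw [Set.inter_eq_left.2 hIH', heq] at this
      exact lt_irrefl _ this

theorem isColorable_iff_ncard_le {M : Matroid α} {S : Set α} (hfin : S.Finite) {r : ℕ}
    (hr : 0 < r) {𝓗 : Set (Set α)} (h𝓗 : ∀ H ∈ 𝓗, H ⊆ S)
    (h𝓗' : 𝓗.Pairwise fun H₁ H₂ => (H₁ ∩ H₂).encard ≤ ((r - 2 : ℕ) : ℕ∞))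
    (hE : M.E = S) (hpav : M.IsPavingOfRank r)
    (hBase : ∀ B, M.IsBase B ↔ B ⊆ S ∧ B.encard = r ∧ ∀ H ∈ 𝓗, ¬B ⊆ H) {k : ℕ} :
    M.IsColorable k ↔ S.ncard ≤ k * r ∧ ∀ H ∈ 𝓗, H.ncard ≤ k * (r - 1) := by
  have hindep {I : Set α} := indep_iff_encard_inter_lt hE hpav hBase (I := I)
  refine ⟨fun hM => ⟨?_, fun H hH => ?_⟩, fun ⟨hS, hH⟩ => ?_⟩
  · have := hM.encard_le_mul hE.symm.subset (m := r) fun I hI =>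
      (Set.encard_le_encard Set.inter_subset_right).trans (hindep.1 hI).2.1
    rw [← hfin.cast_ncard_eq] at this
    exact_mod_cast this
  · have := hM.encard_le_mul (hE ▸ h𝓗 H hH) (m := (r - 1 : ℕ)) fun I hI => by
      rw [Set.inter_comm]
      simpa using ENat.le_sub_one_of_lt ((hindep.1 hI).2.2 H hH)
    rw [← (hfin.subset (h𝓗 H hH)).cast_ncard_eq] at this
    exact_mod_cast this
  classical
  obtain ⟨S, rfl⟩ := hfin.exists_finset_coe
  obtain ⟨f, hf, hfS⟩ := Finset.exists_coloring_pavingIndep (Hs := {T : Finset α | ↑T ∈ 𝓗}) hr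
    (fun T₁ h₁ T₂ h₂ hne => by
      have : ((T₁ : Set α) ∩ T₂).encard ≤ ((r - 2 : ℕ) : ℕ∞) :=
        h𝓗' (show (T₁ : Set α) ∈ 𝓗 from h₁) h₂ (Finset.coe_injective.ne hne)
      rwa [← Finset.coe_inter, Set.encard_coe_eq_coe_finsetCard, Nat.cast_le] at this)
    (by simpa using hS) (fun T hT => by simpa using hH (T : Set α) hT)
  refine isColorable_of_indep_filter f (hE ▸ hf) fun i => ?_
  rw [show {a ∈ M.E | f a = i} = ↑({a ∈ S | f a = i}) by simp [hE]]
  refine hindep.2 ⟨Finset.coe_subset.2 (Finset.filter_subset _ _), ?_, fun H hH => ?_⟩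
  · rw [Set.encard_coe_eq_coe_finsetCard]
    exact_mod_cast (hfS i).1
  · obtain ⟨T, rfl⟩ := ((Finset.finite_toSet S).subset (h𝓗 H hH)).exists_finset_coe
    rw [← Finset.coe_inter, Set.encard_coe_eq_coe_finsetCard]
    exact_mod_cast (hfS i).2 T hH

lemma chi_eq_of_isColorable_iff {M : Matroid α} {k : ℕ} (h : ∀ j, M.IsColorable j ↔ k ≤ j) :
    M.chi = k := by
  rw [Matroid.chi, show {j | M.IsColorable j} = Set.Ici k from Set.ext h, csInf_Ici]

end Matroid

lemma Nat.add_sub_one_div_le_iff {a b c : ℕ} (hb : 0 < b) : (a + b - 1) / b ≤ c ↔ a ≤ c * b := by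
  rw [← Nat.ceilDiv_eq_add_pred_div, ceilDiv_le_iff_le_mul hb, mul_comm]

theorem statement_11_general (S : Set α) (hfin : S.Finite) (r : ℕ) (hr : 2 ≤ r)
    (𝓗 : Set (Set α))
    (h𝓗 : ∀ H ∈ 𝓗, H ⊂ S ∧ (r : ℕ∞) ≤ H.encard)
    (h𝓗' : ∀ H₁ ∈ 𝓗, ∀ H₂ ∈ 𝓗, H₁ ≠ H₂ → (H₁ ∩ H₂).encard ≤ ((r - 2 : ℕ) : ℕ∞))
    (M : Matroid α) (hE : M.E = S) (hpav : M.IsPavingOfRank r)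
    (hBase : ∀ B, M.IsBase B ↔ B ⊆ S ∧ B.encard = (r : ℕ∞) ∧ ∀ H ∈ 𝓗, ¬B ⊆ H) :
    M.chi = max ((S.ncard + r - 1) / r)
      (sSup ((fun H : Set α => (H.ncard + r - 2) / (r - 1)) '' 𝓗)) := by
  have h𝓗fin : 𝓗.Finite := hfin.finite_subsets.subset fun H hH => (h𝓗 H hH).1.subset
  refine Matroid.chi_eq_of_isColorable_iff fun k => ?_
  rw [Matroid.isColorable_iff_ncard_le hfin (by omega) (fun H hH => (h𝓗 H hH).1.subset)
    (fun H₁ h₁ H₂ h₂ => h𝓗' H₁ h₁ H₂ h₂) hE hpav hBase, max_le_iff,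
    csSup_le_iff' (h𝓗fin.image _).bddAbove, Set.forall_mem_image,
    Nat.add_sub_one_div_le_iff (by omega)]
  refine and_congr_right' (forall₂_congr fun H _ => ?_)
  rw [show H.ncard + r - 2 = H.ncard + (r - 1) - 1 by omega,
    Nat.add_sub_one_div_le_iff (by omega)]

/-- The coloring number of the paving matroid of rank `r` defined by the family `𝓗` is
`max {⌈|S|/r⌉, ⌈|H|/(r-1)⌉ for H ∈ 𝓗}`. -/
theorem statement_11 (S : Set α) (hfin : S.Finite) (r : ℕ) (hr : 2 ≤ r)
    (hSr : (r : ℕ∞) ≤ S.encard) (𝓗 : Set (Set α))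
    (h𝓗 : ∀ H ∈ 𝓗, H ⊂ S ∧ (r : ℕ∞) ≤ H.encard)
    (h𝓗' : ∀ H₁ ∈ 𝓗, ∀ H₂ ∈ 𝓗, H₁ ≠ H₂ → (H₁ ∩ H₂).encard ≤ ((r - 2 : ℕ) : ℕ∞))
    (M : Matroid α) (hE : M.E = S) (hpav : M.IsPavingOfRank r)
    (hBase : ∀ B, M.IsBase B ↔ B ⊆ S ∧ B.encard = (r : ℕ∞) ∧ ∀ H ∈ 𝓗, ¬B ⊆ H) :
    M.chi = max ((S.ncard + r - 1) / r)
      (sSup ((fun H : Set α => (H.ncard + r - 2) / (r - 1)) '' 𝓗)) :=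
  statement_11_general S hfin r hr 𝓗 h𝓗 h𝓗' M hE hpav hBase
end

section
/- Consider any coloring of the points of a finite projective plane of order q with three colors such that every line contains at most 2 colors (no line contains points of all three colors). Then at least one of the following holds: (i) some color class is empty, (ii) some color class has exactly one point, or (iii) some color class equals the complement of a line. -/
/-!
Suppose every colour class `Kᵢ` has at least two points and none is the complement of a
line. A line through a point of `Kᵢ` that meets `Kⱼ` misses the third colour `k`, so central
projection from `w ∈ Kᵢ` onto a line avoiding colour `i` matches the lines through `w` meeting
`Kⱼ` with the `j`-points of that line. Hence `x i j`, the number of `j`-points on a line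
avoiding `i`, does not depend on the line, and counting `Kⱼ` along the pencil at a point of
`Kᵢ` gives `|Kⱼ| = x i j * x k j`. Moreover `x i j ≥ 2`: otherwise `Kᵢ ∪ Kⱼ` lies on one
line, whose complement is then `K_k`. With `x k i + x k j = q + 1` and
`∑ |Kⱼ| = q² + q + 1` this forces `(x 1 2 - x 0 2) (x 2 1 - x 0 1) = (x 0 1 - 1) (x 0 2 - 1)`,
which the bounds `2 ≤ x i j ≤ q - 1` rule out.
-/

open Set

variable {α : Type*}

noncomputable def lineThrough (L : Set (Set α)) (p p' : α) : Set α :=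
  Classical.epsilon fun ℓ => ℓ ∈ L ∧ p ∈ ℓ ∧ p' ∈ ℓ

def pencilMeeting (L : Set (Set α)) (w : α) (X : Set α) : Set (Set α) :=
  {m ∈ L | w ∈ m ∧ (m ∩ X).Nonempty}

structure IsWeakProjectivePlane (S : Set α) (L : Set (Set α)) : Prop where
  finite : S.Finite
  subset : ∀ ℓ ∈ L, ℓ ⊆ S
  existsUnique_line : ∀ p ∈ S, ∀ p' ∈ S, p ≠ p' → ∃! ℓ, ℓ ∈ L ∧ p ∈ ℓ ∧ p' ∈ ℓ
  existsUnique_point : ∀ ℓ ∈ L, ∀ ℓ' ∈ L, ℓ ≠ ℓ' → ∃! p, p ∈ ℓ ∩ ℓ'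

namespace IsWeakProjectivePlane

variable {S : Set α} {L : Set (Set α)} {ℓ m m' X Y : Set α} {p p' w y y' : α}

theorem eq_of_mem (P : IsWeakProjectivePlane S L) (hm : m ∈ L) (hm' : m' ∈ L)
    (hp : p ∈ m) (hp' : p' ∈ m) (hpm' : p ∈ m') (hp'm' : p' ∈ m') (hne : p ≠ p') : m = m' :=
  (P.existsUnique_line p (P.subset m hm hp) p' (P.subset m hm hp') hne).unique
    ⟨hm, hp, hp'⟩ ⟨hm', hpm', hp'm'⟩

theorem lineThrough_spec (P : IsWeakProjectivePlane S L) (hp : p ∈ S) (hp' : p' ∈ S)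
    (hne : p ≠ p') :
    lineThrough L p p' ∈ L ∧ p ∈ lineThrough L p p' ∧ p' ∈ lineThrough L p p' :=
  Classical.epsilon_spec (P.existsUnique_line p hp p' hp' hne).exists

theorem eq_lineThrough (P : IsWeakProjectivePlane S L) (hm : m ∈ L) (hp : p ∈ m)
    (hp' : p' ∈ m) (hne : p ≠ p') : m = lineThrough L p p' :=
  have h := P.lineThrough_spec (P.subset m hm hp) (P.subset m hm hp') hne
  P.eq_of_mem hm h.1 hp hp' h.2.1 h.2.2 hne

theorem finite_lines (P : IsWeakProjectivePlane S L) : L.Finite :=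
  P.finite.finite_subsets.subset P.subset

/-- Central projection from `w` onto a line `ℓ` not through `w`. -/
theorem ncard_pencilMeeting_eq (P : IsWeakProjectivePlane S L) (hw : w ∈ S) (hℓ : ℓ ∈ L)
    (hwℓ : w ∉ ℓ) (hX : ∀ m ∈ L, w ∈ m → (m ∩ X).Nonempty → m ∩ ℓ ⊆ X) :
    (pencilMeeting L w X).ncard = (ℓ ∩ X).ncard := by
  have hne : ∀ {x}, x ∈ ℓ → w ≠ x := fun hx h => hwℓ (h ▸ hx)
  have hspec : ∀ {x}, x ∈ ℓ → _ := fun hx =>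
    P.lineThrough_spec hw (P.subset ℓ hℓ hx) (hne hx)
  refine (ncard_congr (fun x _ => lineThrough L w x) ?_ ?_ ?_).symm
  · rintro x ⟨hxℓ, hxX⟩
    obtain ⟨hL, hwl, hxl⟩ := hspec hxℓ
    exact ⟨hL, hwl, x, hxl, hxX⟩
  · rintro x x' ⟨hxℓ, -⟩ ⟨hx'ℓ, -⟩ h
    by_contra hxx'
    obtain ⟨hL, hwl, hxl⟩ := hspec hxℓ
    have hx'l : x' ∈ lineThrough L w x := h ▸ (hspec hx'ℓ).2.2
    exact hwℓ (P.eq_of_mem hL hℓ hxl hx'l hxℓ hx'ℓ hxx' ▸ hwl)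
  · rintro m ⟨hm, hwm, hmX⟩
    obtain ⟨x, hxm, hxℓ⟩ := (P.existsUnique_point m hm ℓ hℓ fun h => hwℓ (h ▸ hwm)).exists
    exact ⟨x, ⟨hxℓ, hX m hm hwm hmX ⟨hxm, hxℓ⟩⟩, (P.eq_lineThrough hm hwm hxm (hne hxℓ)).symm⟩

theorem ncard_eq_ncard_pencilMeeting_mul (P : IsWeakProjectivePlane S L) {k : ℕ} (hw : w ∈ S)
    (hX : X ⊆ S) (hwX : w ∉ X) (hk : ∀ m ∈ pencilMeeting L w X, (m ∩ X).ncard = k) :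
    X.ncard = (pencilMeeting L w X).ncard * k := by
  have hcover : X = ⋃ m ∈ pencilMeeting L w X, m ∩ X := by
    refine Subset.antisymm (fun x hx => ?_) (iUnion₂_subset fun m _ => inter_subset_right)
    obtain ⟨hL, hwl, hxl⟩ := P.lineThrough_spec hw (hX hx) fun h => hwX (h ▸ hx)
    exact mem_biUnion ⟨hL, hwl, x, hxl, hx⟩ ⟨hxl, hx⟩
  have hdisj : (pencilMeeting L w X).PairwiseDisjoint (· ∩ X) := by
    rintro m ⟨hm, hwm, -⟩ m' ⟨hm', hwm', -⟩ hmm'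
    refine disjoint_left.2 fun x ⟨hxm, hxX⟩ ⟨hxm', _⟩ => hmm' ?_
    exact P.eq_of_mem hm hm' hwm hxm hwm' hxm' fun h => hwX (h ▸ hxX)
  have hfin : (pencilMeeting L w X).Finite := P.finite_lines.subset fun m hm => hm.1
  calc X.ncard = (⋃ m ∈ pencilMeeting L w X, m ∩ X).ncard := congrArg ncard hcover
    _ = ∑ᶠ m ∈ pencilMeeting L w X, (m ∩ X).ncard :=
      hfin.ncard_biUnion (fun m hm => (P.finite.subset (P.subset m hm.1)).inter_of_left X) hdisj
    _ = (pencilMeeting L w X).ncard * k := by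
      rw [finsum_mem_congr rfl hk, ← finsum_one, finsum_mem_mul, one_mul]

theorem two_le_ncard_pencilMeeting (P : IsWeakProjectivePlane S L) (hw : w ∈ S) (hY : Y ⊆ S)
    (hwY : w ∉ Y) (hy : y ∈ Y) (hcol : ∀ m ∈ L, ¬ insert w Y ⊆ m) :
    2 ≤ (pencilMeeting L w Y).ncard := by
  have hne : ∀ {x}, x ∈ Y → w ≠ x := fun hx h => hwY (h ▸ hx)
  obtain ⟨hL, hwl, hyl⟩ := P.lineThrough_spec hw (hY hy) (hne hy)
  obtain ⟨y', hy', hy'l⟩ : ∃ y' ∈ Y, y' ∉ lineThrough L w y := by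
    by_contra! h
    exact hcol _ hL (insert_subset hwl h)
  obtain ⟨hL', hwl', hy'l'⟩ := P.lineThrough_spec hw (hY hy') (hne hy')
  exact (one_lt_ncard (P.finite_lines.subset fun m hm => hm.1)).2
    ⟨_, ⟨hL, hwl, y, hyl, hy⟩, _, ⟨hL', hwl', y', hy'l', hy'⟩, fun h => hy'l (h ▸ hy'l')⟩

theorem exists_not_collinear_insert (P : IsWeakProjectivePlane S L) (hy : y ∈ Y)
    (hy' : y' ∈ Y) (hyy' : y ≠ y') (hX : X.Nonempty) (hcol : ∀ m ∈ L, ¬ X ∪ Y ⊆ m) :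
    ∃ w ∈ X, ∀ m ∈ L, ¬ insert w Y ⊆ m := by
  by_contra! h
  obtain ⟨x, hx⟩ := hX
  obtain ⟨m, hm, hxm⟩ := h x hx
  have hsub : ∀ w ∈ X, insert w Y ⊆ m := fun w hw => by
    obtain ⟨m', hm', hwm'⟩ := h w hw
    rwa [P.eq_of_mem hm' hm (hwm' (mem_insert_of_mem w hy)) (hwm' (mem_insert_of_mem w hy'))
      (hxm (mem_insert_of_mem x hy)) (hxm (mem_insert_of_mem x hy')) hyy'] at hwm'
  exact hcol m hm (union_subset (fun w hw => hsub w hw (mem_insert w Y))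
    ((subset_insert x Y).trans hxm))

theorem ncard_eq_of_ncard_line (P : IsWeakProjectivePlane S L) {q : ℕ}
    (hord : ∀ ℓ ∈ L, ℓ.ncard = q + 1) (hw : w ∈ S) (hℓ : ℓ ∈ L) (hwℓ : w ∉ ℓ) :
    S.ncard = q ^ 2 + q + 1 := by
  have hpencil : (pencilMeeting L w (S \ {w})).ncard = q + 1 := by
    rw [P.ncard_pencilMeeting_eq hw hℓ hwℓ, inter_eq_left.2, hord ℓ hℓ]
    · exact fun x hx => ⟨P.subset ℓ hℓ hx, fun h => hwℓ (h ▸ hx)⟩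
    · exact fun m hm _ _ x hx =>
        ⟨P.subset ℓ hℓ hx.2, fun h => hwℓ (mem_singleton_iff.1 h ▸ hx.2)⟩
  have hlines : ∀ m ∈ pencilMeeting L w (S \ {w}), (m ∩ (S \ {w})).ncard = q := by
    rintro m ⟨hm, hwm, -⟩
    rw [← inter_sdiff_assoc, inter_eq_left.2 (P.subset m hm)]
    have := ncard_sdiff_singleton_add_one hwm (P.finite.subset (P.subset m hm))
    have := hord m hm
    omega
  have hcount := P.ncard_eq_ncard_pencilMeeting_mul (X := S \ {w}) hw sdiff_subset
    (fun h => h.2 rfl) hlines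
  calc S.ncard = (S \ {w}).ncard + 1 := (ncard_sdiff_singleton_add_one hw P.finite).symm
    _ = q ^ 2 + q + 1 := by rw [hcount, hpencil]; ring

end IsWeakProjectivePlane

theorem Fin.eq_third_of_ne {i j k t : Fin 3} (hij : i ≠ j) (hik : i ≠ k) (hjk : j ≠ k)
    (hti : t ≠ i) (htj : t ≠ j) : t = k := by
  omega

def colorClass (S : Set α) (c : α → Fin 3) (i : Fin 3) : Set α := {p ∈ S | c p = i}

theorem avoids_third_color {L : Set (Set α)} {c : α → Fin 3} {i j k : Fin 3} {m : Set α}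
    {x y : α} (hc : ∀ ℓ ∈ L, ∃ t : Fin 3, ∀ p ∈ ℓ, c p ≠ t) (hij : i ≠ j) (hik : i ≠ k)
    (hjk : j ≠ k) (hm : m ∈ L) (hx : x ∈ m) (hy : y ∈ m) (hcx : c x = i) (hcy : c y = j) :
    ∀ p ∈ m, c p ≠ k := by
  obtain ⟨t, ht⟩ := hc m hm
  obtain rfl := Fin.eq_third_of_ne hij hik hjk (fun h => ht x hx (hcx.trans h.symm))
    (fun h => ht y hy (hcy.trans h.symm))
  exact ht

theorem ncard_colorClass_add_add {S : Set α} (hS : S.Finite) (c : α → Fin 3) :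
    (colorClass S c 0).ncard + (colorClass S c 1).ncard + (colorClass S c 2).ncard =
      S.ncard := by
  have hcover : S = ⋃ i, colorClass S c i :=
    Subset.antisymm (fun p hp => mem_iUnion.2 ⟨c p, hp, rfl⟩) (iUnion_subset fun i p hp => hp.1)
  rw [hcover, ncard_iUnion_of_finite (fun i => hS.subset fun p hp => hp.1)
    fun i j hij => disjoint_left.2 fun p hpi hpj => hij (hpi.2.symm.trans hpj.2)]
  simp [finsum_eq_sum_of_fintype, Fin.sum_univ_three, colorClass]

namespace IsWeakProjectivePlane

variable {S : Set α} {L : Set (Set α)} {c : α → Fin 3} {i j k : Fin 3} {ℓ ℓ' : Set α}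
  {w x y y' z : α}

local notation "𝒦" => colorClass S c

theorem ncard_pencilMeeting_colorClass (P : IsWeakProjectivePlane S L)
    (hc : ∀ ℓ ∈ L, ∃ t : Fin 3, ∀ p ∈ ℓ, c p ≠ t) (hij : i ≠ j) (hik : i ≠ k) (hjk : j ≠ k)
    (hw : w ∈ 𝒦 i) (hℓ : ℓ ∈ L) (hℓi : ∀ p ∈ ℓ, c p ≠ i) :
    (pencilMeeting L w (𝒦 j)).ncard = (ℓ ∩ 𝒦 j).ncard :=
  P.ncard_pencilMeeting_eq hw.1 hℓ (fun h => hℓi w h hw.2)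
    fun _ hm hwm ⟨_, hym, hy⟩ x ⟨hxm, hxℓ⟩ =>
      ⟨P.subset ℓ hℓ hxℓ, Fin.eq_third_of_ne hik hij hjk.symm (hℓi x hxℓ)
        (avoids_third_color hc hij hik hjk hm hwm hym hw.2 hy.2 x hxm)⟩

theorem ncard_colorClass_eq_mul (P : IsWeakProjectivePlane S L)
    (hc : ∀ ℓ ∈ L, ∃ t : Fin 3, ∀ p ∈ ℓ, c p ≠ t) (hij : i ≠ j) (hik : i ≠ k) (hjk : j ≠ k)
    (hx : x ∈ 𝒦 i) (hz : z ∈ 𝒦 k) (hℓ : ℓ ∈ L) (hℓi : ∀ p ∈ ℓ, c p ≠ i) (hℓ' : ℓ' ∈ L)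
    (hℓ'k : ∀ p ∈ ℓ', c p ≠ k) :
    (𝒦 j).ncard = (ℓ ∩ 𝒦 j).ncard * (ℓ' ∩ 𝒦 j).ncard := by
  rw [← P.ncard_pencilMeeting_colorClass hc hij hik hjk hx hℓ hℓi]
  refine P.ncard_eq_ncard_pencilMeeting_mul hx.1 (fun p hp => hp.1)
    (fun h => hij (hx.2.symm.trans h.2)) ?_
  rintro m ⟨hm, hxm, y, hym, hy⟩
  have hmk := avoids_third_color hc hij hik hjk hm hxm hym hx.2 hy.2
  rw [← P.ncard_pencilMeeting_colorClass hc hjk.symm hik.symm hij.symm hz hm hmk,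
    P.ncard_pencilMeeting_colorClass hc hjk.symm hik.symm hij.symm hz hℓ' hℓ'k]

theorem two_le_ncard_inter_colorClass (P : IsWeakProjectivePlane S L)
    (hc : ∀ ℓ ∈ L, ∃ t : Fin 3, ∀ p ∈ ℓ, c p ≠ t) (hij : i ≠ j) (hik : i ≠ k) (hjk : j ≠ k)
    (hcompl : ∀ m ∈ L, 𝒦 k ≠ S \ m) (hx : x ∈ 𝒦 i) (hy : y ∈ 𝒦 j) (hy' : y' ∈ 𝒦 j)
    (hyy' : y ≠ y') (hℓ : ℓ ∈ L) (hℓi : ∀ p ∈ ℓ, c p ≠ i) : 2 ≤ (ℓ ∩ 𝒦 j).ncard := by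
  have hcol : ∀ m ∈ L, ¬ 𝒦 i ∪ 𝒦 j ⊆ m := by
    intro m hm hsub
    have hmk := avoids_third_color hc hij hik hjk hm (hsub (Or.inl hx)) (hsub (Or.inr hy))
      hx.2 hy.2
    refine hcompl m hm (Subset.antisymm (fun p hp => ⟨hp.1, fun hpm => hmk p hpm hp.2⟩) ?_)
    rintro p ⟨hpS, hpm⟩
    refine ⟨hpS, by_contra fun hpk => ?_⟩
    by_cases hpi : c p = i
    · exact hpm (hsub (Or.inl ⟨hpS, hpi⟩))
    · exact hpm (hsub (Or.inr ⟨hpS, Fin.eq_third_of_ne hik hij hjk.symm hpi hpk⟩))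
  obtain ⟨w, hw, hwcol⟩ := P.exists_not_collinear_insert hy hy' hyy' ⟨x, hx⟩ hcol
  rw [← P.ncard_pencilMeeting_colorClass hc hij hik hjk hw hℓ hℓi]
  exact P.two_le_ncard_pencilMeeting hw.1 (fun p hp => hp.1)
    (fun h => hij (hw.2.symm.trans h.2)) hy hwcol

theorem ncard_inter_colorClass_add (P : IsWeakProjectivePlane S L) {q : ℕ}
    (hord : ∀ ℓ ∈ L, ℓ.ncard = q + 1) (hij : i ≠ j) (hik : i ≠ k) (hjk : j ≠ k)
    (hℓ : ℓ ∈ L) (hℓk : ∀ p ∈ ℓ, c p ≠ k) :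
    (ℓ ∩ 𝒦 i).ncard + (ℓ ∩ 𝒦 j).ncard = q + 1 := by
  have hfin : ℓ.Finite := P.finite.subset (P.subset ℓ hℓ)
  have hsplit : ℓ = ℓ ∩ 𝒦 i ∪ ℓ ∩ 𝒦 j := by
    refine Subset.antisymm (fun p hp => ?_) (union_subset inter_subset_left inter_subset_left)
    by_cases hpi : c p = i
    · exact Or.inl ⟨hp, P.subset ℓ hℓ hp, hpi⟩
    · exact Or.inr ⟨hp, P.subset ℓ hℓ hp, Fin.eq_third_of_ne hik hij hjk.symm hpi (hℓk p hp)⟩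
  have hdisj : Disjoint (ℓ ∩ 𝒦 i) (ℓ ∩ 𝒦 j) :=
    disjoint_left.2 fun p hpi hpj => hij (hpi.2.2.symm.trans hpj.2.2)
  rw [← ncard_union_eq hdisj (hfin.inter_of_left _) (hfin.inter_of_left _), ← hsplit, hord ℓ hℓ]

end IsWeakProjectivePlane

theorem false_of_colorClass_counts {q : ℕ} (x : Fin 3 → Fin 3 → ℕ) (n : Fin 3 → ℕ)
    (hsum : ∀ i j k, i ≠ j → i ≠ k → j ≠ k → x k i + x k j = q + 1)
    (hprod : ∀ i j k, i ≠ j → i ≠ k → j ≠ k → n j = x i j * x k j)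
    (htotal : n 0 + n 1 + n 2 = q ^ 2 + q + 1) (htwo : ∀ i j, i ≠ j → 2 ≤ x i j) : False := by
  have h0 := hsum 1 2 0 (by decide) (by decide) (by decide)
  have h1 := hsum 0 2 1 (by decide) (by decide) (by decide)
  have h2 := hsum 0 1 2 (by decide) (by decide) (by decide)
  rw [hprod 1 0 2 (by decide) (by decide) (by decide),
    hprod 0 1 2 (by decide) (by decide) (by decide),
    hprod 0 2 1 (by decide) (by decide) (by decide)] at htotal
  have h01 := htwo 0 1 (by decide)
  have h02 := htwo 0 2 (by decide)
  have h10 := htwo 1 0 (by decide)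
  have h12 := htwo 1 2 (by decide)
  have h20 := htwo 2 0 (by decide)
  have h21 := htwo 2 1 (by decide)
  zify at *
  have key : ((x 1 2 : ℤ) - x 0 2) * (x 2 1 - x 0 1) = (x 0 1 - 1) * (x 0 2 - 1) := by
    have e1 : (x 1 0 : ℤ) = q + 1 - x 1 2 := by linarith
    have e2 : (x 2 0 : ℤ) = q + 1 - x 2 1 := by linarith
    have e3 : (q : ℤ) = x 0 1 + x 0 2 - 1 := by linarith
    rw [e1, e2, e3] at htotal
    linear_combination htotal
  -- The two factors on the left lie in `[2 - x 0 2, x 0 1 - 2]` and `[2 - x 0 1, x 0 2 - 2]`,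
  -- so their product is at most `(x 0 1 - 2) * (x 0 2 - 2)`.
  rcases le_or_gt (x 1 2 : ℤ) (x 0 2) with h | h
  · nlinarith
  · nlinarith

theorem statement_13_general (S : Set α) (L : Set (Set α)) (q : ℕ) (hfin : S.Finite)
    (hLS : ∀ ℓ ∈ L, ℓ ⊆ S)
    (hP1 : ∀ p ∈ S, ∀ p' ∈ S, p ≠ p' → ∃! ℓ, ℓ ∈ L ∧ p ∈ ℓ ∧ p' ∈ ℓ)
    (hP2 : ∀ ℓ ∈ L, ∀ ℓ' ∈ L, ℓ ≠ ℓ' → ∃! p, p ∈ ℓ ∩ ℓ')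
    (horder : ∀ ℓ ∈ L, ℓ.encard = ((q + 1 : ℕ) : ℕ∞))
    (c : α → Fin 3)
    (hc : ∀ ℓ ∈ L, ∃ i : Fin 3, ∀ p ∈ ℓ, c p ≠ i) :
    (∃ i : Fin 3, ∀ p ∈ S, c p ≠ i) ∨
    (∃ i : Fin 3, {p ∈ S | c p = i}.encard = 1) ∨
    (∃ i : Fin 3, ∃ ℓ ∈ L, {p ∈ S | c p = i} = S \ ℓ) := by
  by_contra! ⟨hne, hne1, hcompl⟩
  have P : IsWeakProjectivePlane S L := ⟨hfin, hLS, hP1, hP2⟩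
  have hord : ∀ ℓ ∈ L, ℓ.ncard = q + 1 := fun ℓ hℓ => by
    rw [ncard_def, horder ℓ hℓ, ENat.toNat_natCast]
  have htwo : ∀ i, ∃ x y, x ∈ colorClass S c i ∧ y ∈ colorClass S c i ∧ x ≠ y := fun i =>
    one_lt_encard_iff.1 ((one_le_encard_iff_nonempty.2 (hne i)).lt_of_ne (hne1 i).symm)
  choose a a' ha ha' haa' using htwo
  have hline : ∀ k, ∃ ℓ ∈ L, ∀ p ∈ ℓ, c p ≠ k := fun k => by
    obtain ⟨i, j, hij, hik, hjk⟩ : ∃ i j, i ≠ j ∧ i ≠ k ∧ j ≠ k := by revert k; decide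
    obtain ⟨hL, hi, hj⟩ :=
      P.lineThrough_spec (ha i).1 (ha j).1 fun h => hij ((ha i).2.symm.trans (h ▸ (ha j).2))
    exact ⟨_, hL, avoids_third_color hc hij hik hjk hL hi hj (ha i).2 (ha j).2⟩
  choose ℓ hℓ hℓk using hline
  refine false_of_colorClass_counts (q := q) (fun k j => (ℓ k ∩ colorClass S c j).ncard)
    (fun j => (colorClass S c j).ncard) (fun i j k hij hik hjk => ?_)
    (fun i j k hij hik hjk => ?_) ?_ fun i j hij => ?_
  · exact P.ncard_inter_colorClass_add hord hij hik hjk (hℓ k) (hℓk k)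
  · exact P.ncard_colorClass_eq_mul hc hij hik hjk (ha i) (ha k) (hℓ i) (hℓk i) (hℓ k) (hℓk k)
  · rw [ncard_colorClass_add_add hfin,
      P.ncard_eq_of_ncard_line hord (ha 0).1 (hℓ 0) fun h => hℓk 0 _ h (ha 0).2]
  · obtain ⟨k, hik, hjk⟩ : ∃ k, i ≠ k ∧ j ≠ k := by revert i j; decide
    exact P.two_le_ncard_inter_colorClass hc hij hik hjk (hcompl k) (ha i) (ha j) (ha' j)
      (haa' j) (hℓ i) (hℓk i)

/-- In any 3-coloring of the points of a finite projective plane of order `q` in which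
every line misses some color, either some color class is empty, or some color class is a
single point, or some color class is the complement of a line. -/
theorem statement_13 (S : Set α) (L : Set (Set α)) (q : ℕ) (hfin : S.Finite)
    (hLS : ∀ ℓ ∈ L, ℓ ⊆ S)
    (hP1 : ∀ p ∈ S, ∀ p' ∈ S, p ≠ p' → ∃! ℓ, ℓ ∈ L ∧ p ∈ ℓ ∧ p' ∈ ℓ)
    (hP2 : ∀ ℓ ∈ L, ∀ ℓ' ∈ L, ℓ ≠ ℓ' → ∃! p, p ∈ ℓ ∩ ℓ')
    (hP3 : ∃ p₁ p₂ p₃ p₄ : α, ({p₁, p₂, p₃, p₄} : Set α) ⊆ S ∧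
      ({p₁, p₂, p₃, p₄} : Set α).encard = 4 ∧
      ∀ ℓ ∈ L, (({p₁, p₂, p₃, p₄} : Set α) ∩ ℓ).encard ≤ 2)
    (horder : ∀ ℓ ∈ L, ℓ.encard = ((q + 1 : ℕ) : ℕ∞))
    (c : α → Fin 3)
    (hc : ∀ ℓ ∈ L, ∃ i : Fin 3, ∀ p ∈ ℓ, c p ≠ i) :
    (∃ i : Fin 3, ∀ p ∈ S, c p ≠ i) ∨
    (∃ i : Fin 3, {p ∈ S | c p = i}.encard = 1) ∨
    (∃ i : Fin 3, ∃ ℓ ∈ L, {p ∈ S | c p = i} = S \ ℓ) :=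
  statement_13_general S L q hfin hLS hP1 hP2 horder c hc
end
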